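/- arXiv:1607.03791 — 5 statements merged into one kernel-verified Lean document; each statement's English description precedes it below -/
import Mathlib

section
/- In a star-shaped shadow-complete instance, the tree augmentation problem on (G, L, c) is equivalent to a minimum-cost edge cover problem: feasible augmentation solutions correspond bijectively (preserving cost) to edge covers of the auxiliary graph H whose vertex set is the leaves of G together with the hub r, where each link touching a leaf becomes an edge of H and r carries a cost-zero self-loop. -/
/-!
A leaf `w` is an endpoint of every tree path through it, so a set of links covers the unique
edge at `w` only if `w` is an endpoint of one of its links. Conversely, every tree edge lies on
the path from some leaf `w` to the hub `r`, and a link with endpoint `w` passes through `r`,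
so its path contains that whole `w`–`r` path. Hence feasibility means exactly that every leaf
other than `r` is an endpoint of a chosen link, which is the edge-cover condition on `H`
(the hub being covered by its self-loop).
-/

open SimpleGraph

/-- The unique path between two vertices of a tree, as a walk. -/
noncomputable def tpath {V : Type*} (G : SimpleGraph V) (hG : G.IsTree) (u v : V) : G.Walk u v :=
  (hG.existsUnique_path u v).choose

/-- The set of edges of the unique `u`-`v` path in the tree `G`. -/
noncomputable def pathEdges {V : Type*} (G : SimpleGraph V) (hG : G.IsTree) (u v : V) :
    Set (Sym2 V) := {e | e ∈ (tpath G hG u v).edges}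

/-- The edges of the auxiliary graph `H`: one edge per link (`Sum.inl ℓ`) plus a
cost-zero self-loop at the hub (`Sum.inr ()`).  The vertex `w` of `H` is incident to
the `H`-edge corresponding to the link `ℓ = (u,v)` if `w` is a leaf endpoint of `ℓ`,
or if `w = r` and `ℓ` has an internal (non-leaf) endpoint; the self-loop is incident
only to the hub `r`. -/
def HIncident {V : Type*} (leaf : V → Prop) (r w : V) : (V × V) ⊕ Unit → Prop
  | Sum.inl ℓ => (leaf ℓ.1 ∧ w = ℓ.1) ∨ (leaf ℓ.2 ∧ w = ℓ.2) ∨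
      ((¬ leaf ℓ.1 ∨ ¬ leaf ℓ.2) ∧ w = r)
  | Sum.inr _ => w = r

/-- The cost of an edge of `H`: the cost of the corresponding link; the self-loop at
the hub has cost `0`. -/
def HCost {V : Type*} (c : V × V → ℝ) : (V × V) ⊕ Unit → ℝ
  | Sum.inl ℓ => c ℓ
  | Sum.inr _ => 0

theorem SimpleGraph.Walk.IsPath.eq_or_eq_of_degree_eq_one {V : Type*} {G : SimpleGraph V}
    {a b w : V} {p : G.Walk a b} (hp : p.IsPath) [Fintype (G.neighborSet w)]
    (hw : G.degree w = 1) (hmem : w ∈ p.support) : w = a ∨ w = b := by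
  by_contra! hne
  obtain ⟨q, q', rfl⟩ := Walk.mem_support_iff_exists_append.mp hmem
  obtain ⟨z, -, hz⟩ := degree_eq_one_iff_existsUnique_adj.mp hw
  have hq := q.adj_penultimate (Walk.not_nil_of_ne hne.1.symm)
  have hq' := q'.adj_snd (Walk.not_nil_of_ne hne.2)
  exact hp.ne_of_mem_support_of_append hq'.ne' (q.getVert_mem_support _)
    (q'.getVert_mem_support 1)
    ((hz _ hq.symm).trans (hz _ hq').symm)

section TreePaths

variable {V : Type*} {G : SimpleGraph V} (hG : G.IsTree)
include hG

theorem tpath_isPath (u v : V) : (tpath G hG u v).IsPath :=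
  (hG.existsUnique_path u v).choose_spec.1

theorem tpath_eq_of_isPath {u v : V} {p : G.Walk u v} (hp : p.IsPath) : tpath G hG u v = p :=
  ((hG.existsUnique_path u v).choose_spec.2 p hp).symm

theorem tpath_comm (u v : V) : tpath G hG v u = (tpath G hG u v).reverse :=
  tpath_eq_of_isPath hG (tpath_isPath hG u v).reverse

theorem tpath_eq_cons {t u v : V} (h : G.Adj t u) (ht : t ∉ (tpath G hG u v).support) :
    tpath G hG t v = .cons h (tpath G hG u v) :=
  tpath_eq_of_isPath hG ((tpath_isPath hG u v).cons ht)

theorem pathEdges_comm (u v : V) : pathEdges G hG v u = pathEdges G hG u v := by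
  ext e
  simp [pathEdges, tpath_comm hG u v]

theorem ne_of_mem_pathEdges {u v : V} {e : Sym2 V} (he : e ∈ pathEdges G hG u v) : u ≠ v := by
  rintro rfl
  rw [pathEdges, tpath_eq_of_isPath hG (Walk.IsPath.nil (u := u))] at he
  simp at he

theorem pathEdges_subset_of_mem_support_left {a b r : V} (hr : r ∈ (tpath G hG a b).support) :
    pathEdges G hG a r ⊆ pathEdges G hG a b := by
  classical
  rw [pathEdges, tpath_eq_of_isPath hG ((tpath_isPath hG a b).takeUntil hr)]
  exact Walk.edges_takeUntil_subset_edges _ hr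

theorem pathEdges_subset_of_mem_support_right {a b r : V} (hr : r ∈ (tpath G hG a b).support) :
    pathEdges G hG b r ⊆ pathEdges G hG a b := by
  rw [← pathEdges_comm hG a b]
  exact pathEdges_subset_of_mem_support_left hG (by simpa [tpath_comm hG a b] using hr)

theorem exists_mem_pathEdges_of_adj (r : V) {y z : V} (h : G.Adj y z) :
    ∃ u, s(y, z) ∈ pathEdges G hG u r := by
  by_cases hy : y ∈ (tpath G hG z r).support
  · refine ⟨z, ?_⟩
    have hnil : ¬(tpath G hG z r).Nil :=
      fun hn ↦ h.ne (by simpa [Walk.nil_iff_support_eq.mp hn] using hy)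
    rw [hG.isAcyclic.eq_snd_of_adj_start (tpath_isPath hG z r) h.symm hy, Sym2.eq_swap]
    exact Walk.mk_start_snd_mem_edges hnil
  · exact ⟨y, by simp [pathEdges, tpath_eq_cons hG h hy]⟩

theorem exists_degree_eq_one_mem_pathEdges [Fintype V] [DecidableRel G.Adj] (r : V) {e : Sym2 V}
    (he : e ∈ G.edgeSet) : ∃ w, G.degree w = 1 ∧ e ∈ pathEdges G hG w r := by
  classical
  induction e with | _ y z => ?_
  -- A vertex farthest from `r` whose path to `r` contains the edge is a leaf: a second
  -- neighbour would lie off that path and extend it.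
  obtain ⟨u₀, hu₀⟩ := exists_mem_pathEdges_of_adj hG r he
  obtain ⟨u, hu, hmax⟩ := (Finset.univ.filter (s(y, z) ∈ pathEdges G hG · r)).exists_max_image
    (fun u ↦ (tpath G hG u r).length) ⟨u₀, by simpa using hu₀⟩
  rw [Finset.mem_filter] at hu
  refine ⟨u, ?_, hu.2⟩
  by_contra hdeg
  have hnil : ¬(tpath G hG u r).Nil := Walk.not_nil_of_ne (ne_of_mem_pathEdges hG hu.2)
  obtain ⟨t, ht, htp⟩ : ∃ t, G.Adj u t ∧ t ∉ (tpath G hG u r).support := by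
    by_contra! hall
    exact hdeg <| degree_eq_one_iff_existsUnique_adj.mpr ⟨_, Walk.adj_snd hnil,
      fun t ht ↦ hG.isAcyclic.eq_snd_of_adj_start (tpath_isPath hG u r) ht (hall t ht)⟩
  have hcons := tpath_eq_cons hG ht.symm htp
  have hlt : (tpath G hG u r).length < (tpath G hG t r).length := by simp [hcons]
  refine hlt.not_ge (hmax t (Finset.mem_filter.mpr ⟨Finset.mem_univ t, ?_⟩))
  change s(y, z) ∈ (tpath G hG t r).edges
  rw [hcons]
  exact List.mem_cons_of_mem _ hu.2

theorem exists_mem_pathEdges_of_forall_degree_eq_one [Fintype V] [DecidableRel G.Adj] {r : V}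
    {C : Set (V × V)} (hstar : ∀ ℓ ∈ C, r ∈ (tpath G hG ℓ.1 ℓ.2).support)
    (hcov : ∀ w, G.degree w = 1 → w ≠ r → ∃ ℓ ∈ C, w = ℓ.1 ∨ w = ℓ.2) {e : Sym2 V}
    (he : e ∈ G.edgeSet) : ∃ ℓ ∈ C, e ∈ pathEdges G hG ℓ.1 ℓ.2 := by
  obtain ⟨w, hw, hew⟩ := exists_degree_eq_one_mem_pathEdges hG r he
  obtain ⟨ℓ, hℓ, rfl | rfl⟩ := hcov w hw (ne_of_mem_pathEdges hG hew)
  · exact ⟨ℓ, hℓ, pathEdges_subset_of_mem_support_left hG (hstar ℓ hℓ) hew⟩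
  · exact ⟨ℓ, hℓ, pathEdges_subset_of_mem_support_right hG (hstar ℓ hℓ) hew⟩

theorem exists_endpoint_eq_of_forall_mem_pathEdges {C : Set (V × V)}
    (hfeas : ∀ e ∈ G.edgeSet, ∃ ℓ ∈ C, e ∈ pathEdges G hG ℓ.1 ℓ.2) {w : V}
    [Fintype (G.neighborSet w)] (hw : G.degree w = 1) : ∃ ℓ ∈ C, w = ℓ.1 ∨ w = ℓ.2 := by
  obtain ⟨z, hz, -⟩ := degree_eq_one_iff_existsUnique_adj.mp hw
  obtain ⟨ℓ, hℓ, hwz⟩ := hfeas s(w, z) hz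
  exact ⟨ℓ, hℓ, (tpath_isPath hG ℓ.1 ℓ.2).eq_or_eq_of_degree_eq_one hw
    (Walk.fst_mem_support_of_mem_edges _ hwz)⟩

end TreePaths

section AuxiliaryGraph

variable {V : Type*}

theorem hIncident_inl_iff {leaf : V → Prop} {r w : V} (hw : leaf w) (hwr : w ≠ r) (ℓ : V × V) :
    HIncident leaf r w (Sum.inl ℓ) ↔ w = ℓ.1 ∨ w = ℓ.2 := by
  grind [HIncident]

theorem forall_exists_hIncident_iff [DecidableEq V] (leaf : V → Prop) (r : V)
    (C : Finset (V × V)) :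
    (∀ w, (leaf w ∨ w = r) →
        ∃ x ∈ (C.image Sum.inl ∪ {Sum.inr ()} : Finset ((V × V) ⊕ Unit)), HIncident leaf r w x) ↔
      ∀ w, leaf w → w ≠ r → ∃ ℓ ∈ C, w = ℓ.1 ∨ w = ℓ.2 := by
  constructor
  · intro hcov w hw hwr
    obtain ⟨x, hx, hinc⟩ := hcov w (.inl hw)
    rw [Finset.mem_union, Finset.mem_image, Finset.mem_singleton] at hx
    rcases hx with ⟨ℓ, hℓ, rfl⟩ | rfl
    · exact ⟨ℓ, hℓ, (hIncident_inl_iff hw hwr ℓ).mp hinc⟩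
    · exact absurd hinc hwr
  · intro hcov w hw
    by_cases hwr : w = r
    · exact ⟨Sum.inr (), by simp, hwr⟩
    · have hw := hw.resolve_right hwr
      obtain ⟨ℓ, hℓ, hend⟩ := hcov w hw hwr
      exact ⟨Sum.inl ℓ, by simp [hℓ], (hIncident_inl_iff hw hwr ℓ).mpr hend⟩

theorem sum_hCost [DecidableEq V] (c : V × V → ℝ) (C : Finset (V × V)) :
    ∑ x ∈ (C.image Sum.inl ∪ {Sum.inr ()} : Finset ((V × V) ⊕ Unit)), HCost c x =
      ∑ ℓ ∈ C, c ℓ := by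
  rw [Finset.sum_union (by simp), Finset.sum_singleton, Finset.sum_image (by simp)]
  simp [HCost]

end AuxiliaryGraph

theorem star_shaped_equiv_edge_cover_general {V : Type*} [Fintype V] [DecidableEq V]
    (G : SimpleGraph V) [DecidableRel G.Adj] (hG : G.IsTree) (r : V)
    (L : Finset (V × V)) (c : V × V → ℝ)
    (hstar : ∀ ℓ ∈ L, r ∈ (tpath G hG ℓ.1 ℓ.2).support)
    (C : Finset (V × V)) (hC : C ⊆ L) :
    ((∀ w : V, (G.degree w = 1 ∨ w = r) →
        ∃ x ∈ (C.image Sum.inl ∪ {Sum.inr ()} : Finset ((V × V) ⊕ Unit)),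
          HIncident (fun u => G.degree u = 1) r w x) ↔
      (∀ e ∈ G.edgeSet, ∃ ℓ ∈ C, e ∈ pathEdges G hG ℓ.1 ℓ.2)) ∧
    ∑ x ∈ (C.image Sum.inl ∪ {Sum.inr ()} : Finset ((V × V) ⊕ Unit)), HCost c x
      = ∑ ℓ ∈ C, c ℓ := by
  refine ⟨(forall_exists_hIncident_iff _ r C).trans ⟨fun hcov e he ↦ ?_, fun hfeas w hw _ ↦ ?_⟩,
    sum_hCost c C⟩
  · exact exists_mem_pathEdges_of_forall_degree_eq_one hG (fun ℓ hℓ ↦ hstar ℓ (hC hℓ)) hcov he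
  · exact exists_endpoint_eq_of_forall_mem_pathEdges hG hfeas hw

/-- For a star-shaped shadow-complete instance with hub `r` in which
every link touches a leaf, tree augmentation on `(G, L, c)` is equivalent to minimum-cost
edge cover on the auxiliary graph `H` (vertices: the leaves of `G` together with `r`):
a set of links `C ⊆ L` is a feasible augmentation solution iff the corresponding edge set
of `H` (together with the self-loop at `r`) is an edge cover of `H`, and the
correspondence preserves cost. -/
theorem star_shaped_equiv_edge_cover {V : Type*} [Fintype V] [DecidableEq V]
    (G : SimpleGraph V) [DecidableRel G.Adj] (hG : G.IsTree) (r : V)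
    (L : Finset (V × V)) (c : V × V → ℝ)
    (hstar : ∀ ℓ ∈ L, r ∈ (tpath G hG ℓ.1 ℓ.2).support)
    (hleaf : ∀ ℓ ∈ L, G.degree ℓ.1 = 1 ∨ G.degree ℓ.2 = 1)
    (C : Finset (V × V)) (hC : C ⊆ L) :
    ((∀ w : V, (G.degree w = 1 ∨ w = r) →
        ∃ x ∈ (C.image Sum.inl ∪ {Sum.inr ()} : Finset ((V × V) ⊕ Unit)),
          HIncident (fun u => G.degree u = 1) r w x) ↔
      (∀ e ∈ G.edgeSet, ∃ ℓ ∈ C, e ∈ pathEdges G hG ℓ.1 ℓ.2)) ∧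
    ∑ x ∈ (C.image Sum.inl ∪ {Sum.inr ()} : Finset ((V × V) ⊕ Unit)), HCost c x
      = ∑ ℓ ∈ C, c ℓ :=
  star_shaped_equiv_edge_cover_general G hG r L c hstar C hC
end

section
/- If x is a fractional edge cover of a graph G with costs c ≥ 0, then there exists an integral edge cover C with c(C) ≤ (4/3) · cᵀx. In other words, the integrality gap of the fractional edge cover LP is at most 4/3. -/
/-!
Cap `x` at `1` and take a cheapest point `z` of the capped LP that is an extreme point of the face
of cheapest points (Krein–Milman). Then no nonzero perturbation supported on the set `F` of
fractional edges keeps every tight vertex tight, so the incidence matrix between the tight vertices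
meeting `F` and `F` is injective and `|F|` is at most the number of those vertices. A tight vertex
cannot meet exactly one fractional edge (the other edges at it carry `0` or `1`), so each of them
meets at least two, and double counting forces every vertex meeting `F` to be tight and to meet
exactly two fractional edges; perturbing by `z - 1/2` on `F` then shows `z = 1/2` on `F`.
The edges with `z = 1`, together with `F` minus a matching of `F` carrying a third of its cost
(greedily, as `F` has maximum degree two), form an edge cover of cost at most
`c(z = 1) + (2/3) c(F) ≤ (4/3) cᵀz`.
-/

open Finset Filter Topology

theorem eq_zero_of_mem_extremePoints_inter_preimage_Iic {E : Type*} [AddCommGroup E] [Module ℝ E]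
    {K : Set E} {φ : E →ₗ[ℝ] ℝ} {m : ℝ} (hm : ∀ y ∈ K, m ≤ φ y) {z d : E}
    (hz : z ∈ (K ∩ φ ⁻¹' Set.Iic m).extremePoints ℝ) (hadd : z + d ∈ K) (hsub : z - d ∈ K) :
    d = 0 := by
  have hzm : φ z ≤ m := hz.1.2
  have h₁ := hm _ hadd
  have h₂ := hm _ hsub
  rw [map_add] at h₁
  rw [map_sub] at h₂
  have hsub' : z - d ∈ K ∩ φ ⁻¹' Set.Iic m := ⟨hsub, show φ (z - d) ≤ m by rw [map_sub]; linarith⟩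
  have hadd' : z + d ∈ K ∩ φ ⁻¹' Set.Iic m := ⟨hadd, show φ (z + d) ≤ m by rw [map_add]; linarith⟩
  simpa using ((mem_extremePoints.1 hz).2 _ hsub' _ hadd' (mem_openSegment_sub_add z d)).1

lemma Finset.eq_ite_of_le_of_sum_le_mul_card {ι : Type*} [Fintype ι] [DecidableEq ι] {f : ι → ℕ}
    {T : Finset ι} {k : ℕ} (hle : ∀ i ∈ T, k ≤ f i) (hsum : ∑ i, f i ≤ k * #T) (i : ι) :
    f i = if i ∈ T then k else 0 := by
  have hT : k * #T ≤ ∑ i ∈ T, f i := by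
    simpa [mul_comm] using sum_le_sum hle
  have hsplit := sum_sdiff (subset_univ T) (f := f)
  split_ifs with hi
  · have heq : ∑ i ∈ T, k = ∑ i ∈ T, f i := by
      rw [sum_const, smul_eq_mul, mul_comm]; omega
    exact ((sum_eq_sum_iff_of_le hle).1 heq i hi).symm
  · have hzero : ∑ i ∈ univ \ T, f i = 0 := by omega
    exact sum_eq_zero_iff.1 hzero i (mem_sdiff.2 ⟨mem_univ i, hi⟩)

namespace EdgeCover

variable {V : Type*} [DecidableEq V]

def edgesAt (E : Finset (Sym2 V)) (v : V) : Finset (Sym2 V) := {e ∈ E | v ∈ e}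

@[simp]
lemma mem_edgesAt {E : Finset (Sym2 V)} {v : V} {e : Sym2 V} : e ∈ edgesAt E v ↔ e ∈ E ∧ v ∈ e :=
  mem_filter

lemma edgesAt_insert (e : Sym2 V) (E : Finset (Sym2 V)) (v : V) :
    edgesAt (insert e E) v = if v ∈ e then insert e (edgesAt E v) else edgesAt E v :=
  filter_insert _ _ _

lemma edgesAt_mono {E E' : Finset (Sym2 V)} (h : E ⊆ E') (v : V) : edgesAt E v ⊆ edgesAt E' v :=
  filter_subset_filter _ h

lemma sum_card_edgesAt [Fintype V] {E : Finset (Sym2 V)} (hE : ∀ e ∈ E, ¬e.IsDiag) :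
    ∑ v, #(edgesAt E v) = 2 * #E := by
  calc ∑ v, #(edgesAt E v) = ∑ e ∈ E, #e.toFinset := by
        refine (sum_card_bipartiteAbove_eq_sum_card_bipartiteBelow (r := (· ∈ ·))).trans
          (sum_congr rfl fun e _ => ?_)
        congr 1; ext v; simp [bipartiteBelow]
    _ = 2 * #E := by
        rw [sum_congr rfl fun e he => Sym2.card_toFinset_of_not_isDiag e (hE e he), sum_const,
          smul_eq_mul, mul_comm]

theorem exists_matching_sum_le (c : Sym2 V → ℝ) (k : ℕ) (H : Finset (Sym2 V))
    (hc : ∀ e ∈ H, 0 ≤ c e) (hdeg : ∀ v, #(edgesAt H v) ≤ k) :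
    ∃ D ⊆ H, (∀ v, #(edgesAt D v) ≤ 1) ∧ ∑ e ∈ H, c e ≤ (2 * k - 1 : ℕ) * ∑ e ∈ D, c e := by
  induction H using Finset.strongInduction with
  | H H ih =>
  obtain rfl | hne := H.eq_empty_or_nonempty
  · exact ⟨∅, by simp [edgesAt]⟩
  -- Greedy: keep a heaviest edge and discard the at most `2k - 1` edges meeting it.
  obtain ⟨e₀, he₀, hmax⟩ := H.exists_max_image c hne
  obtain ⟨a, b, rfl⟩ : ∃ a b, e₀ = s(a, b) := Sym2.exists.mp ⟨e₀, rfl⟩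
  set N := edgesAt H a ∪ edgesAt H b
  have hNH : N ⊆ H := union_subset (filter_subset _ _) (filter_subset _ _)
  have hN : #N ≤ 2 * k - 1 := by
    have hab : s(a, b) ∈ edgesAt H a ∩ edgesAt H b := by simp [he₀]
    have : #N + #(edgesAt H a ∩ edgesAt H b) = #(edgesAt H a) + #(edgesAt H b) :=
      card_union_add_card_inter _ _
    have := card_pos.mpr ⟨_, hab⟩
    have := hdeg a; have := hdeg b
    omega
  obtain ⟨D, hDH, hDmatch, hDsum⟩ :=
    ih (H \ N) (sdiff_ssubset hNH ⟨s(a, b), by simp [N, he₀]⟩) (fun e he => hc e (mem_sdiff.1 he).1)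
    (fun v => (Finset.card_le_card (edgesAt_mono sdiff_subset v)).trans (hdeg v))
  have hD : ∀ v ∈ s(a, b), edgesAt D v = ∅ := by
    intro v hv
    refine eq_empty_of_forall_notMem fun e he => ?_
    obtain ⟨heD, hve⟩ := mem_edgesAt.1 he
    obtain ⟨heH, heN⟩ := mem_sdiff.1 (hDH heD)
    have he' : e ∈ edgesAt H v := mem_edgesAt.2 ⟨heH, hve⟩
    apply heN
    rcases Sym2.mem_iff.1 hv with rfl | rfl
    · exact mem_union_left _ he'
    · exact mem_union_right _ he'
  have hnotD : s(a, b) ∉ D := fun h => by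
    simpa [hD a (Sym2.mem_mk_left a b)] using mem_edgesAt.2 ⟨h, Sym2.mem_mk_left a b⟩
  refine ⟨insert s(a, b) D, insert_subset he₀ (hDH.trans sdiff_subset), fun v => ?_, ?_⟩
  · rw [edgesAt_insert]
    split_ifs with hv
    · simp [hD v hv]
    · exact hDmatch v
  · have hNsum : ∑ e ∈ N, c e ≤ (2 * k - 1 : ℕ) * c s(a, b) := by
      calc ∑ e ∈ N, c e ≤ #N • c s(a, b) := sum_le_card_nsmul _ _ _ fun e he => hmax e (hNH he)
        _ ≤ (2 * k - 1 : ℕ) * c s(a, b) := by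
          rw [nsmul_eq_mul]; gcongr; exact hc _ he₀
    rw [← sum_sdiff hNH, sum_insert hnotD, mul_add]
    linarith

theorem exists_cover_of_card_edgesAt_le_two (c : Sym2 V → ℝ) (hc : ∀ e, 0 ≤ c e)
    (A H : Finset (Sym2 V)) (hH : ∀ v, #(edgesAt H v) ≤ 2)
    (hcov : ∀ v, (edgesAt A v).Nonempty ∨ #(edgesAt H v) = 2) :
    ∃ C ⊆ A ∪ H, (∀ v, ∃ e ∈ C, v ∈ e) ∧
      3 * ∑ e ∈ C, c e ≤ 3 * ∑ e ∈ A, c e + 2 * ∑ e ∈ H, c e := by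
  obtain ⟨D, hDH, hD, hDsum⟩ := exists_matching_sum_le c 2 H (fun e _ => hc e) hH
  refine ⟨A ∪ (H \ D), union_subset_union_right sdiff_subset, fun v => ?_, ?_⟩
  · rcases hcov v with ⟨e, he⟩ | h2
    · exact ⟨e, mem_union_left _ (mem_edgesAt.1 he).1, (mem_edgesAt.1 he).2⟩
    · obtain ⟨e, he, heD⟩ :=
        exists_mem_notMem_of_card_lt_card ((hD v).trans_lt (by omega : 1 < #(edgesAt H v)))
      obtain ⟨heH, hve⟩ := mem_edgesAt.1 he
      exact ⟨e, mem_union_right _ (mem_sdiff.2 ⟨heH, fun h => heD (mem_edgesAt.2 ⟨h, hve⟩)⟩), hve⟩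
  · have hunion := sum_union_inter (s₁ := A) (s₂ := H \ D) (f := c)
    have hinter : 0 ≤ ∑ e ∈ A ∩ (H \ D), c e := sum_nonneg fun e _ => hc e
    have hsdiff := sum_sdiff hDH (f := c)
    simp only [Nat.reduceMul, Nat.reduceSub, Nat.cast_ofNat] at hDsum
    linarith

-- The fractional edge cover LP of the edge set `S` with the redundant bounds `y e ≤ 1`;
-- coordinates outside `S` enter neither the cover constraints nor the cost.
def coverPolytope (S : Finset (Sym2 V)) : Set (Sym2 V → ℝ) :=
  {y | (∀ e, y e ∈ Set.Icc 0 1) ∧ ∀ v, 1 ≤ ∑ e ∈ edgesAt S v, y e}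

noncomputable def fracEdges (S : Finset (Sym2 V)) (z : Sym2 V → ℝ) : Finset (Sym2 V) :=
  {e ∈ S | z e ∈ Set.Ioo 0 1}

def IsTight (S : Finset (Sym2 V)) (z : Sym2 V → ℝ) (v : V) : Prop := ∑ e ∈ edgesAt S v, z e = 1

-- Every vertex of `coverPolytope S` is rigid: the bounds `0 ≤ z e ≤ 1` are slack exactly on the
-- fractional edges, and the cover constraints exactly at the vertices that are not tight.
def IsRigid (S : Finset (Sym2 V)) (z : Sym2 V → ℝ) : Prop :=
  ∀ d : Sym2 V → ℝ, (∀ e ∉ fracEdges S z, d e = 0) →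
    (∀ v, IsTight S z v → ∑ e ∈ edgesAt (fracEdges S z) v, d e = 0) → d = 0

noncomputable instance (S : Finset (Sym2 V)) (z : Sym2 V → ℝ) : DecidablePred (IsTight S z) :=
  fun _ => inferInstanceAs (Decidable (_ = _))

variable {S : Finset (Sym2 V)} {z d : Sym2 V → ℝ}

lemma sum_edgesAt_fracEdges (hd : ∀ e ∉ fracEdges S z, d e = 0) (v : V) :
    ∑ e ∈ edgesAt (fracEdges S z) v, d e = ∑ e ∈ edgesAt S v, d e :=
  sum_subset (edgesAt_mono (filter_subset _ _) v) fun e he hne =>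
    hd e fun hF => hne (mem_edgesAt.2 ⟨hF, (mem_edgesAt.1 he).2⟩)

lemma isCompact_coverPolytope (S : Finset (Sym2 V)) : IsCompact (coverPolytope S) := by
  refine (isCompact_univ_pi fun _ => isCompact_Icc (a := (0 : ℝ)) (b := 1)).of_isClosed_subset
    ?_ fun y hy e _ => hy.1 e
  simp only [coverPolytope, Set.ofPred_and, Set.ofPred_forall]
  exact (isClosed_iInter fun e => isClosed_Icc.preimage (continuous_apply e)).inter
    (isClosed_iInter fun v => isClosed_le continuous_const
      (continuous_finsetSum _ fun e _ => continuous_apply e))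

lemma min_one_mem_coverPolytope {x : Sym2 V → ℝ} (hx : ∀ e, 0 ≤ x e)
    (hcover : ∀ v, 1 ≤ ∑ e ∈ edgesAt S v, x e) : (fun e => min (x e) 1) ∈ coverPolytope S := by
  refine ⟨fun e => ⟨le_min (hx e) zero_le_one, min_le_right _ _⟩, fun v => ?_⟩
  by_cases h : ∃ e ∈ edgesAt S v, 1 ≤ x e
  · obtain ⟨e, he, hxe⟩ := h
    calc (1 : ℝ) = min (x e) 1 := (min_eq_right hxe).symm
      _ ≤ _ := single_le_sum (fun e _ => le_min (hx e) zero_le_one) he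
  · simp only [not_exists, not_and, not_le] at h
    rw [sum_congr rfl fun e he => min_eq_left (h e he).le]
    exact hcover v

lemma sum_edgesAt_eq_card_add_sum (hz : ∀ e, z e ∈ Set.Icc 0 1) (v : V) :
    ∑ e ∈ edgesAt S v, z e
      = #(edgesAt {e ∈ S | z e = 1} v) + ∑ e ∈ edgesAt (fracEdges S z) v, z e := by
  have hsplit : ∀ e, z e = (if z e = 1 then 1 else 0) + if z e ∈ Set.Ioo 0 1 then z e else 0 := by
    intro e
    by_cases h1 : z e = 1
    · simp [h1]
    by_cases h0 : z e = 0
    · simp [h0]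
    · simp [h1, Set.mem_Ioo, (hz e).1.lt_of_ne' h0, (hz e).2.lt_of_ne h1]
  have hones : {e ∈ edgesAt S v | z e = 1} = edgesAt {e ∈ S | z e = 1} v := by
    ext; simp only [mem_filter, mem_edgesAt]; tauto
  have hfrac : {e ∈ edgesAt S v | z e ∈ Set.Ioo 0 1} = edgesAt (fracEdges S z) v := by
    ext; simp only [fracEdges, mem_filter, mem_edgesAt]; tauto
  rw [sum_congr rfl fun e _ => hsplit e, sum_add_distrib, ← natCast_card_filter, ← sum_filter,
    hones, hfrac]

lemma IsTight.sum_edgesAt_fracEdges_eq_one {v : V} (hv : IsTight S z v)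
    (hz : ∀ e, z e ∈ Set.Icc 0 1) (hne : (edgesAt (fracEdges S z) v).Nonempty) :
    ∑ e ∈ edgesAt (fracEdges S z) v, z e = 1 := by
  have hpos : 0 < ∑ e ∈ edgesAt (fracEdges S z) v, z e :=
    sum_pos (fun e he => (mem_filter.1 (mem_edgesAt.1 he).1).2.1) hne
  have hsum := sum_edgesAt_eq_card_add_sum (S := S) hz v
  rw [hv] at hsum
  rcases Nat.eq_zero_or_pos #(edgesAt {e ∈ S | z e = 1} v) with h | h
  · simp only [h, CharP.cast_eq_zero, zero_add] at hsum
    exact hsum.symm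
  · have : (1 : ℝ) ≤ #(edgesAt {e ∈ S | z e = 1} v) := by exact_mod_cast h
    linarith

variable [Fintype V]

lemma eventually_add_smul_mem_coverPolytope (hz : z ∈ coverPolytope S)
    (hd : ∀ e ∉ fracEdges S z, d e = 0)
    (htight : ∀ v, IsTight S z v → ∑ e ∈ edgesAt S v, d e = 0) :
    ∀ᶠ t in 𝓝 (0 : ℝ), z + t • d ∈ coverPolytope S := by
  simp only [coverPolytope, Set.mem_ofPred_eq, eventually_and, eventually_all]
  refine ⟨fun e => ?_, fun v => ?_⟩
  · by_cases he : e ∈ fracEdges S z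
    · have hcont : Continuous fun t : ℝ => z e + t * d e := by fun_prop
      have hze : z e ∈ Set.Ioo 0 1 := (mem_filter.1 he).2
      have := hcont.tendsto 0 |>.eventually (isOpen_Ioo.mem_nhds (by simpa using hze))
      exact this.mono fun t ht => by simpa using Set.Ioo_subset_Icc_self ht
    · exact .of_forall fun t => by simpa [hd e he] using hz.1 e
  · have hsum : ∀ t : ℝ, ∑ e ∈ edgesAt S v, (z + t • d) e
        = ∑ e ∈ edgesAt S v, z e + t * ∑ e ∈ edgesAt S v, d e := fun t => by
      simp [sum_add_distrib, mul_sum]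
    simp only [hsum]
    by_cases hv : IsTight S z v
    · exact .of_forall fun t => by simpa [htight v hv] using hz.2 v
    · have hcont : Continuous fun t : ℝ =>
          ∑ e ∈ edgesAt S v, z e + t * ∑ e ∈ edgesAt S v, d e := by fun_prop
      exact hcont.tendsto 0 |>.eventually (lt_mem_nhds (by simpa using (hz.2 v).lt_of_ne' hv))
        |>.mono fun t => le_of_lt

lemma exists_isRigid_sum_mul_le (c : Sym2 V → ℝ) {y : Sym2 V → ℝ} (hy : y ∈ coverPolytope S) :
    ∃ z ∈ coverPolytope S, ∑ e ∈ S, c e * z e ≤ ∑ e ∈ S, c e * y e ∧ IsRigid S z := by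
  let φ : (Sym2 V → ℝ) →ₗ[ℝ] ℝ := ∑ e ∈ S, c e • LinearMap.proj e
  have hφ : ∀ w, φ w = ∑ e ∈ S, c e * w e := fun w => by simp [φ]
  obtain ⟨w, hwK, hwmin⟩ := (isCompact_coverPolytope S).exists_isMinOn ⟨y, hy⟩
    φ.continuous_of_finiteDimensional.continuousOn
  have hM : IsCompact (coverPolytope S ∩ φ ⁻¹' Set.Iic (φ w)) :=
    (isCompact_coverPolytope S).inter_right
      (isClosed_Iic.preimage φ.continuous_of_finiteDimensional)
  obtain ⟨z, hz⟩ := hM.extremePoints_nonempty ⟨w, hwK, le_refl (φ w)⟩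
  refine ⟨z, hz.1.1, ?_, fun d hd htight => ?_⟩
  · rw [← hφ, ← hφ]
    exact hz.1.2.trans (hwmin hy)
  have hev := eventually_add_smul_mem_coverPolytope hz.1.1 hd fun v hv => by
    rw [← sum_edgesAt_fracEdges hd]; exact htight v hv
  have hneg : ∀ᶠ t in 𝓝 (0 : ℝ), z - t • d ∈ coverPolytope S := by
    simpa [sub_eq_add_neg] using (continuous_neg.tendsto' (0 : ℝ) 0 neg_zero).eventually hev
  obtain ⟨t, ⟨hadd, hsub⟩, ht⟩ :=
    ((hev.and hneg).filter_mono nhdsWithin_le_nhds).and (self_mem_nhdsWithin (s := {0}ᶜ)) |>.exists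
  exact (smul_eq_zero.1 (eq_zero_of_mem_extremePoints_inter_preimage_Iic
    (fun y hy => hwmin hy) hz hadd hsub)).resolve_left ht

lemma IsRigid.card_fracEdges_le (hrigid : IsRigid S z) :
    #(fracEdges S z) ≤ #{v | IsTight S z v ∧ (edgesAt (fracEdges S z) v).Nonempty} := by
  set F := fracEdges S z
  set T : Finset V := {v | IsTight S z v ∧ (edgesAt F v).Nonempty}
  let A : Matrix T F ℝ := fun v e => if (v : V) ∈ (e : Sym2 V) then 1 else 0
  have hinj : Function.Injective A.mulVecLin := by
    rw [← LinearMap.ker_eq_bot, LinearMap.ker_eq_bot']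
    intro g hg
    let d : Sym2 V → ℝ := fun e => if h : e ∈ F then g ⟨e, h⟩ else 0
    have hd : d = 0 := hrigid d (fun e he => dif_neg he) fun v hv => by
      by_cases hvT : v ∈ T
      · have := congrFun (show A.mulVec g = 0 from hg) ⟨v, hvT⟩
        rw [edgesAt, sum_filter, ← sum_coe_sort F]
        simpa [A, d, Matrix.mulVec, dotProduct] using this
      · have : edgesAt F v = ∅ :=
          not_nonempty_iff_eq_empty.1 fun h => hvT (mem_filter.2 ⟨mem_univ _, hv, h⟩)
        rw [this, sum_empty]
    funext e
    simpa [d] using congrFun hd e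
  simpa using LinearMap.finrank_le_finrank_of_injective hinj

theorem IsRigid.isTight_and_card_edgesAt_eq_two (hrigid : IsRigid S z) (hS : ∀ e ∈ S, ¬e.IsDiag)
    (hz : z ∈ coverPolytope S) {v : V} (hv : (edgesAt (fracEdges S z) v).Nonempty) :
    IsTight S z v ∧ #(edgesAt (fracEdges S z) v) = 2 := by
  set F := fracEdges S z
  set T : Finset V := {v | IsTight S z v ∧ (edgesAt F v).Nonempty}
  have hT : ∀ v ∈ T, 2 ≤ #(edgesAt F v) := by
    intro v hvT
    obtain ⟨htight, hne⟩ := (mem_filter.1 hvT).2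
    have hlt : ∑ e ∈ edgesAt F v, z e < ∑ e ∈ edgesAt F v, 1 :=
      sum_lt_sum_of_nonempty hne fun e he => (mem_filter.1 (mem_edgesAt.1 he).1).2.2
    rw [htight.sum_edgesAt_fracEdges_eq_one hz.1 hne, sum_const, nsmul_one] at hlt
    exact_mod_cast hlt
  have hsum : ∑ v, #(edgesAt F v) ≤ 2 * #T := by
    rw [sum_card_edgesAt (E := F) fun e he => hS e (filter_subset _ _ he)]
    exact Nat.mul_le_mul_left 2 hrigid.card_fracEdges_le
  have := eq_ite_of_le_of_sum_le_mul_card hT hsum v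
  split_ifs at this with hvT
  · exact ⟨(mem_filter.1 hvT).2.1, this⟩
  · exact absurd this (card_pos.2 hv).ne'

theorem IsRigid.eq_half (hrigid : IsRigid S z) (hS : ∀ e ∈ S, ¬e.IsDiag)
    (hz : z ∈ coverPolytope S) {e : Sym2 V} (he : e ∈ fracEdges S z) :
    z e = 1 / 2 := by
  let d : Sym2 V → ℝ := fun e => if e ∈ fracEdges S z then z e - 1 / 2 else 0
  have hd : d = 0 := hrigid d (fun e he => if_neg he) fun v hv => by
    rw [sum_congr rfl fun e he => if_pos (mem_edgesAt.1 he).1, sum_sub_distrib, sum_const,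
      nsmul_eq_mul]
    obtain hempty | hne := (edgesAt (fracEdges S z) v).eq_empty_or_nonempty
    · simp [hempty]
    · rw [(hrigid.isTight_and_card_edgesAt_eq_two hS hz hne).2,
        hv.sum_edgesAt_fracEdges_eq_one hz.1 hne]
      norm_num
  have := congrFun hd e
  simp only [d, if_pos he, Pi.zero_apply] at this
  linarith

theorem IsRigid.exists_cover_sum_le (c : Sym2 V → ℝ) (hc : ∀ e, 0 ≤ c e)
    (hrigid : IsRigid S z) (hS : ∀ e ∈ S, ¬e.IsDiag) (hz : z ∈ coverPolytope S) :
    ∃ C ⊆ S, (∀ v, ∃ e ∈ C, v ∈ e) ∧ ∑ e ∈ C, c e ≤ 4 / 3 * ∑ e ∈ S, c e * z e := by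
  set A : Finset (Sym2 V) := {e ∈ S | z e = 1}
  set F := fracEdges S z
  have hcard : ∀ v, #(edgesAt F v) = 0 ∨ #(edgesAt F v) = 2 := fun v => by
    obtain hempty | hne := (edgesAt F v).eq_empty_or_nonempty
    · exact .inl (card_eq_zero.2 hempty)
    · exact .inr (hrigid.isTight_and_card_edgesAt_eq_two hS hz hne).2
  have hcov : ∀ v, (edgesAt A v).Nonempty ∨ #(edgesAt F v) = 2 := fun v => by
    refine (hcard v).imp_left fun h0 => card_pos.1 ?_
    have hsum := sum_edgesAt_eq_card_add_sum (S := S) hz.1 v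
    rw [card_eq_zero.1 h0, sum_empty, add_zero] at hsum
    exact_mod_cast (hz.2 v).trans_eq hsum
  have hle : ∀ v, #(edgesAt F v) ≤ 2 := fun v => by rcases hcard v with h | h <;> omega
  obtain ⟨C, hCAF, hCcov, hCsum⟩ := exists_cover_of_card_edgesAt_le_two c hc A F hle hcov
  refine ⟨C, hCAF.trans (union_subset (filter_subset _ _) (filter_subset _ _)), hCcov, ?_⟩
  have hdisj : Disjoint A F :=
    disjoint_filter_filter' _ _ fun p h1 h2 e he => by simpa [h1 e he] using h2 e he
  have hAF : ∑ e ∈ A, c e + 1 / 2 * ∑ e ∈ F, c e ≤ ∑ e ∈ S, c e * z e :=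
    calc ∑ e ∈ A, c e + 1 / 2 * ∑ e ∈ F, c e = ∑ e ∈ A ∪ F, c e * z e := by
          rw [sum_union hdisj, mul_sum]
          congr 1 <;> refine sum_congr rfl fun e he => ?_
          · rw [(mem_filter.1 he).2, mul_one]
          · rw [hrigid.eq_half hS hz he, mul_comm]
      _ ≤ ∑ e ∈ S, c e * z e :=
          sum_le_sum_of_subset_of_nonneg (union_subset (filter_subset _ _) (filter_subset _ _))
            fun e _ _ => mul_nonneg (hc e) (hz.1 e).1
  have hA : 0 ≤ ∑ e ∈ A, c e := sum_nonneg fun e _ => hc e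
  linarith

end EdgeCover

open EdgeCover

theorem edge_cover_integrality_gap_general {V : Type*} [Fintype V] [DecidableEq V]
    (G : SimpleGraph V) [DecidableRel G.Adj]
    (c x : Sym2 V → ℝ) (hc : ∀ e, 0 ≤ c e) (hx : ∀ e, 0 ≤ x e)
    (hcover : ∀ u : V, 1 ≤ ∑ e ∈ G.incidenceFinset u, x e) :
    ∃ C ⊆ G.edgeFinset, (∀ u : V, ∃ e ∈ C, u ∈ e) ∧
      ∑ e ∈ C, c e ≤ (4 / 3) * ∑ e ∈ G.edgeFinset, c e * x e := by
  have hS : ∀ e ∈ G.edgeFinset, ¬e.IsDiag := fun e he =>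
    G.not_isDiag_of_mem_edgeSet (SimpleGraph.mem_edgeFinset.1 he)
  have hcap := min_one_mem_coverPolytope hx fun v => (G.incidenceFinset_eq_filter v ▸ hcover v)
  obtain ⟨z, hz, hzx, hrigid⟩ := exists_isRigid_sum_mul_le c hcap
  obtain ⟨C, hCS, hCcov, hCz⟩ := hrigid.exists_cover_sum_le c hc hS hz
  refine ⟨C, hCS, hCcov, hCz.trans ?_⟩
  refine mul_le_mul_of_nonneg_left (hzx.trans ?_) (by norm_num)
  exact sum_le_sum fun e _ => mul_le_mul_of_nonneg_left (min_le_left _ _) (hc e)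

/-- If `x` is a fractional edge cover of a graph `G` with nonnegative
edge costs `c`, then there exists an integral edge cover `C` of cost at most
`(4/3)·cᵀx`; i.e. the integrality gap of the fractional edge cover LP is at most `4/3`. -/
theorem edge_cover_integrality_gap {V : Type*} [Fintype V] [DecidableEq V]
    (G : SimpleGraph V) [DecidableRel G.Adj]
    (c x : Sym2 V → ℝ) (hc : ∀ e, 0 ≤ c e) (hx : ∀ e, 0 ≤ x e)
    (hsupp : ∀ e ∉ G.edgeFinset, x e = 0)
    (hcover : ∀ u : V, 1 ≤ ∑ e ∈ G.incidenceFinset u, x e) :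
    ∃ C ⊆ G.edgeFinset, (∀ u : V, ∃ e ∈ C, u ∈ e) ∧
      ∑ e ∈ C, c e ≤ (4 / 3) * ∑ e ∈ G.edgeFinset, c e * x e :=
  edge_cover_integrality_gap_general G c x hc hx hcover
end

section
/- Let (T, z) be a tree with fractional solution satisfying thin coverage z(cov(e)) ≤ 2/ε for every edge e, costs in [1, M], and suppose T has no (4M/ε²)-thin edge with respect to z. Then (T, z) is (48M/ε²)-simple: there exists a node u whose removal splits T into trees K₁,…,K_t such that each K_j has at most 48M/ε² leaves and the total fractional cost of links internal to K_j is at most 48M/ε². -/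
open SimpleGraph
open scoped Classical

/-- `cov(e)`: the links whose tree path contains the edge `e`. -/
noncomputable def covE {V : Type*} (G : SimpleGraph V) (hG : G.IsTree) (e : Sym2 V) :
    Set (V × V) := {ℓ | e ∈ (tpath G hG ℓ.1 ℓ.2).edges}

/-- The vertex set of the component of `u` after deleting the edge `{u,v}`. -/
def sideOf {V : Type*} (G : SimpleGraph V) (u v : V) : Set V :=
  {w | (G.deleteEdges {s(u, v)}).Reachable u w}

/-- An edge `{p,q}` of the tree is `α`-thin w.r.t. `z`: on each of the two components of
`T − e`, the total fractional cost of links with both endpoints in that component is at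
least `α`. -/
noncomputable def ThinEdge {V : Type*} [Fintype V] (G : SimpleGraph V)
    (L : Finset (V × V)) (c z : V × V → ℝ) (α : ℝ) (p q : V) : Prop :=
  (α ≤ ∑ ℓ ∈ L.filter (fun ℓ => ℓ.1 ∈ sideOf G p q ∧ ℓ.2 ∈ sideOf G p q), c ℓ * z ℓ) ∧
  (α ≤ ∑ ℓ ∈ L.filter (fun ℓ => ℓ.1 ∈ sideOf G q p ∧ ℓ.2 ∈ sideOf G q p), c ℓ * z ℓ)

/-- `K` is (the vertex set of) a connected component of `T − u`. -/
def IsCompAt {V : Type*} (G : SimpleGraph V) (u : V) (K : Set V) : Prop :=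
  ∃ w, w ≠ u ∧ K = {x | (G.deleteEdges {e | u ∈ e}).Reachable w x}

/-- The number of leaves of the subtree induced on `K`: vertices of `K` with exactly one
neighbour inside `K`. -/
noncomputable def leafCount {V : Type*} [Fintype V] (G : SimpleGraph V) (K : Set V) : ℕ :=
  (Finset.univ.filter (fun x => x ∈ K ∧
    (Finset.univ.filter (fun y => y ∈ K ∧ G.Adj x y)).card = 1)).card

/-!
Orient each tree edge `{a, b}` towards `b` when the side of `b` carries internal cost at least
`4M/ε²`. No edge is thin, so no edge is oriented both ways, and such a partial orientation of a
finite tree has a sink `u`. Every component of `T − u` is the side `K` of `v` for an edge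
`{u, v}`, so its internal cost is below `4M/ε²`. Each leaf of `K` lies on the tree paths of links
of total weight at least `1`, while a tree path meets at most three leaves of `K` (its two ends and
`v`), and only links inside `K` or covering `{u, v}` meet any. Hence the number of leaves is at most
`3 (cost inside K) + 3 z(cov(uv)) ≤ 12M/ε² + 6/ε ≤ 48M/ε²`.
-/

open Finset

namespace SimpleGraph

variable {V : Type*} {G : SimpleGraph V}

lemma Reachable.deleteEdges_incident_of_not_reachable {u x y : V} (hxy : G.Reachable x y)
    (hu : ¬ G.Reachable x u) : (G.deleteEdges {e | u ∈ e}).Reachable x y := by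
  obtain ⟨p⟩ := hxy
  refine ⟨p.toDeleteEdges _ fun e he hue => hu ?_⟩
  induction e with
  | h a b =>
    rcases Sym2.mem_iff.mp hue with rfl | rfl
    · exact ⟨p.takeUntil _ (p.fst_mem_support_of_mem_edges he)⟩
    · exact ⟨p.takeUntil _ (p.snd_mem_support_of_mem_edges he)⟩

lemma Walk.IsPath.exists_adj_adj_ne {a b x : V} {p : G.Walk a b} (hp : p.IsPath)
    (hx : x ∈ p.support) (hxa : x ≠ a) (hxb : x ≠ b) :
    ∃ y₁ y₂, y₁ ≠ y₂ ∧ G.Adj x y₁ ∧ G.Adj x y₂ := by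
  obtain ⟨n, rfl, hn⟩ := Walk.mem_support_iff_exists_getVert.mp hx
  obtain ⟨m, rfl⟩ : ∃ m, n = m + 1 :=
    Nat.exists_eq_add_one_of_ne_zero fun h => hxa (by simp [h])
  have hlt : m + 1 < p.length := lt_of_le_of_ne hn fun h => hxb (by simp [h])
  refine ⟨p.getVert m, p.getVert (m + 2), fun h => ?_, (p.adj_getVert_succ (by omega)).symm,
    p.adj_getVert_succ hlt⟩
  have := hp.getVert_injOn (show m ≤ p.length by omega) (show m + 2 ≤ p.length by omega) h
  omega

lemma mem_sideOf_self {u v : V} : v ∈ sideOf G v u := Reachable.refl v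

lemma mem_sideOf_of_adj {u v x y : V} (hx : x ∈ sideOf G v u) (hxy : G.Adj x y)
    (he : s(x, y) ≠ s(v, u)) : y ∈ sideOf G v u :=
  hx.trans (deleteEdges_adj.mpr ⟨hxy, he⟩).reachable

lemma Walk.mem_edges_of_mem_sideOf {u v a b x : V} (p : G.Walk a b) (hx : x ∈ p.support)
    (hxK : x ∈ sideOf G v u) (hab : ¬ (a ∈ sideOf G v u ∧ b ∈ sideOf G v u)) :
    s(v, u) ∈ p.edges := by
  rcases not_and_or.mp hab with ha | hb
  · have := (p.takeUntil x hx).reverse.mem_edges_of_not_reachable_deleteEdges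
      fun h => ha (hxK.trans h)
    rw [Walk.edges_reverse, List.mem_reverse] at this
    exact p.edges_takeUntil_subset_edges hx this
  · exact p.edges_dropUntil_subset_edges hx
      ((p.dropUntil x hx).mem_edges_of_not_reachable_deleteEdges fun h => hb (hxK.trans h))

namespace IsAcyclic

variable (hG : G.IsAcyclic)
include hG

lemma notMem_sideOf {u v : V} (huv : G.Adj u v) : u ∉ sideOf G v u :=
  isAcyclic_iff_forall_adj_isBridge.mp hG huv.symm

lemma mem_sideOf_of_adj_of_ne {u v x y : V} (huv : G.Adj u v) (hx : x ∈ sideOf G v u)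
    (hxv : x ≠ v) (hxy : G.Adj x y) : y ∈ sideOf G v u := by
  refine mem_sideOf_of_adj hx hxy fun he => ?_
  rcases Sym2.eq_iff.mp he with ⟨rfl, -⟩ | ⟨rfl, -⟩
  · exact hxv rfl
  · exact hG.notMem_sideOf huv hx

lemma sideOf_eq {u v : V} (huv : G.Adj u v) :
    sideOf G v u = {x | (G.deleteEdges {e | u ∈ e}).Reachable v x} := by
  ext x
  refine ⟨fun hx => ?_, fun hx => hx.mono (deleteEdges_anti (by simp))⟩
  exact (hx.deleteEdges_incident_of_not_reachable (hG.notMem_sideOf huv)).mono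
    (deleteEdges_mono (deleteEdges_le _))

lemma sideOf_ssubset {a b c : V} (hbc : G.Adj b c) (hca : c ≠ a) :
    sideOf G c b ⊂ sideOf G b a := by
  refine (Set.ssubset_iff_of_subset fun x hx => ?_).mpr
    ⟨b, mem_sideOf_self, hG.notMem_sideOf hbc⟩
  rw [hG.sideOf_eq hbc] at hx
  have hbc' : c ∈ sideOf G b a :=
    mem_sideOf_of_adj mem_sideOf_self hbc fun h => hca (Sym2.congr_right.mp h)
  exact hbc'.trans (hx.mono (deleteEdges_anti (by simp)))

/-- `P` orients some edges of `G`; following out-edges never backtracks, so the side ahead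
shrinks strictly and a sink exists. -/
lemma exists_forall_adj_not [Finite V] [Nonempty V] (P : V → V → Prop)
    (hP : ∀ a b, G.Adj a b → P a b → ¬ P b a) : ∃ u, ∀ v, G.Adj u v → ¬ P u v := by
  by_contra! h
  let S : Set (V × V) := {ab | G.Adj ab.1 ab.2 ∧ P ab.1 ab.2}
  have hS : S.Nonempty := let u := Classical.arbitrary V; ⟨(u, (h u).choose), (h u).choose_spec⟩
  obtain ⟨⟨a, b⟩, ⟨hab, hPab⟩, hmin⟩ :=
    Set.exists_min_image S (fun ab => (sideOf G ab.2 ab.1).ncard) S.toFinite hS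
  obtain ⟨c, hbc, hPbc⟩ := h b
  have hca : c ≠ a := by rintro rfl; exact hP _ _ hab hPab hPbc
  exact (hmin (b, c) ⟨hbc, hPbc⟩).not_gt
    (Set.ncard_lt_ncard (hG.sideOf_ssubset hbc hca) (Set.toFinite _))

end IsAcyclic

lemma IsTree.exists_adj_eq_sideOf_of_isCompAt (hG : G.IsTree) {u : V} {K : Set V}
    (hK : IsCompAt G u K) : ∃ v, G.Adj u v ∧ K = sideOf G v u := by
  obtain ⟨w, hwu, rfl⟩ := hK
  obtain ⟨p, hp⟩ := hG.connected.exists_isPath u w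
  cases p with
  | nil => exact absurd rfl hwu
  | @cons _ v _ huv q =>
    have hq := (Walk.cons_isPath_iff huv q).mp hp
    have hw : w ∈ sideOf G v u :=
      ⟨q.toDeleteEdge _ fun he => hq.2 (q.snd_mem_support_of_mem_edges he)⟩
    refine ⟨v, huv, ?_⟩
    rw [hG.isAcyclic.sideOf_eq huv] at hw ⊢
    exact Set.ext fun x => ⟨hw.trans, hw.symm.trans⟩

section Leaves

variable [Fintype V]

noncomputable def leaves (G : SimpleGraph V) (K : Set V) : Finset V :=
  univ.filter fun x => x ∈ K ∧ (univ.filter fun y => y ∈ K ∧ G.Adj x y).card = 1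

lemma leafCount_eq_card_leaves (K : Set V) : leafCount G K = #(G.leaves K) := rfl

lemma IsAcyclic.leaves_sideOf_filter_mem_support_subset (hG : G.IsAcyclic) {u v a b : V}
    (huv : G.Adj u v) {p : G.Walk a b} (hp : p.IsPath) :
    (G.leaves (sideOf G v u)).filter (· ∈ p.support) ⊆ {a, b, v} := by
  intro x hx
  simp only [leaves, mem_filter, mem_univ, true_and] at hx
  obtain ⟨⟨hxK, hleaf⟩, hxp⟩ := hx
  simp only [mem_insert, mem_singleton]
  by_contra! hx
  obtain ⟨y₁, y₂, hne, hy₁, hy₂⟩ := hp.exists_adj_adj_ne hxp hx.1 hx.2.1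
  obtain ⟨y, hy⟩ := card_eq_one.mp hleaf
  have mem_y {w : V} (hw : G.Adj x w) : w = y := by
    have : w ∈ univ.filter fun y => y ∈ sideOf G v u ∧ G.Adj x y :=
      mem_filter.mpr ⟨mem_univ w, hG.mem_sideOf_of_adj_of_ne huv hxK hx.2.2 hw, hw⟩
    simpa [hy] using this
  exact hne ((mem_y hy₁).trans (mem_y hy₂).symm)

end Leaves

section LinkCover

variable (hG : G.IsTree) (L : Finset (V × V)) (z : V × V → ℝ)

lemma one_le_sum_mem_support_of_adj (hz0 : ∀ ℓ, 0 ≤ z ℓ)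
    (hfeas : ∀ e ∈ G.edgeSet, 1 ≤ ∑ ℓ ∈ L.filter (· ∈ covE G hG e), z ℓ) {x y : V}
    (hxy : G.Adj x y) :
    1 ≤ ∑ ℓ ∈ L.filter (fun ℓ => x ∈ (tpath G hG ℓ.1 ℓ.2).support), z ℓ :=
  (hfeas s(x, y) hxy).trans <| sum_le_sum_of_subset_of_nonneg
    (monotone_filter_right L fun _ _ => Walk.fst_mem_support_of_mem_edges _)
    fun ℓ _ _ => hz0 ℓ

variable [Fintype V]

lemma card_leaves_sideOf_mem_support_mul_le {u v : V} (huv : G.Adj u v) (ℓ : V × V) {w : ℝ}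
    (hw : 0 ≤ w) :
    (#((G.leaves (sideOf G v u)).filter (· ∈ (tpath G hG ℓ.1 ℓ.2).support)) : ℝ) * w ≤
      3 * (if ℓ.1 ∈ sideOf G v u ∧ ℓ.2 ∈ sideOf G v u then w else 0) +
        3 * (if ℓ ∈ covE G hG s(v, u) then w else 0) := by
  set p := tpath G hG ℓ.1 ℓ.2
  set n := #((G.leaves (sideOf G v u)).filter (· ∈ p.support))
  have hn : (n : ℝ) ≤ 3 := by
    have hp : p.IsPath := (hG.existsUnique_path ℓ.1 ℓ.2).choose_spec.1
    exact_mod_cast (card_le_card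
      (hG.isAcyclic.leaves_sideOf_filter_mem_support_subset huv hp)).trans card_le_three
  have hcross (hℓ : ¬ (ℓ.1 ∈ sideOf G v u ∧ ℓ.2 ∈ sideOf G v u)) (hn0 : n ≠ 0) :
      ℓ ∈ covE G hG s(v, u) := by
    obtain ⟨x, hx⟩ := card_ne_zero.mp hn0
    simp only [leaves, mem_filter, mem_univ, true_and] at hx
    exact p.mem_edges_of_mem_sideOf hx.2 hx.1.1 hℓ
  split_ifs with hin hcov hcov
  · nlinarith
  · nlinarith
  · nlinarith
  · rw [show n = 0 by by_contra hn0; exact hcov (hcross hin hn0)]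
    simp

theorem leafCount_sideOf_le (hz0 : ∀ ℓ, 0 ≤ z ℓ)
    (hfeas : ∀ e ∈ G.edgeSet, 1 ≤ ∑ ℓ ∈ L.filter (· ∈ covE G hG e), z ℓ) {u v : V}
    (huv : G.Adj u v) :
    (leafCount G (sideOf G v u) : ℝ) ≤
      3 * ∑ ℓ ∈ L.filter (fun ℓ => ℓ.1 ∈ sideOf G v u ∧ ℓ.2 ∈ sideOf G v u), z ℓ +
        3 * ∑ ℓ ∈ L.filter (· ∈ covE G hG s(v, u)), z ℓ := by
  set F := G.leaves (sideOf G v u)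
  have hleaf_adj (x : V) (hx : x ∈ F) : ∃ y, G.Adj x y := by
    simp only [F, leaves, mem_filter, mem_univ, true_and] at hx
    obtain ⟨y, hy⟩ := card_pos.mp (hx.2 ▸ Nat.one_pos)
    exact ⟨y, (mem_filter.mp hy).2.2⟩
  calc (leafCount G (sideOf G v u) : ℝ) = ∑ _x ∈ F, (1 : ℝ) := by
        simp [leafCount_eq_card_leaves, F]
    _ ≤ ∑ x ∈ F, ∑ ℓ ∈ L.filter (fun ℓ => x ∈ (tpath G hG ℓ.1 ℓ.2).support), z ℓ :=
        sum_le_sum fun x hx =>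
          (hleaf_adj x hx).elim fun _ hxy => one_le_sum_mem_support_of_adj hG L z hz0 hfeas hxy
    _ = ∑ ℓ ∈ L, (#(F.filter (· ∈ (tpath G hG ℓ.1 ℓ.2).support)) : ℝ) * z ℓ := by
        simp_rw [sum_filter]
        rw [sum_comm]
        simp [← sum_filter]
    _ ≤ ∑ ℓ ∈ L, (3 * (if ℓ.1 ∈ sideOf G v u ∧ ℓ.2 ∈ sideOf G v u then z ℓ else 0) +
          3 * (if ℓ ∈ covE G hG s(v, u) then z ℓ else 0)) :=
        sum_le_sum fun ℓ _ => card_leaves_sideOf_mem_support_mul_le hG huv ℓ (hz0 ℓ)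
    _ = _ := by rw [sum_add_distrib, ← mul_sum, ← mul_sum, ← sum_filter, ← sum_filter]

end LinkCover

end SimpleGraph

theorem no_thin_edge_implies_simple_general {V : Type*} [Fintype V]
    (G : SimpleGraph V) (hG : G.IsTree) (L : Finset (V × V)) (c z : V × V → ℝ)
    (ε M : ℝ) (hε : 0 < ε) (hε1 : ε ≤ 1) (hM : 1 ≤ M)
    (hc : ∀ ℓ ∈ L, 1 ≤ c ℓ ∧ c ℓ ≤ M) (hz0 : ∀ ℓ, 0 ≤ z ℓ)
    (hfeas : ∀ e ∈ G.edgeSet, 1 ≤ ∑ ℓ ∈ L.filter (· ∈ covE G hG e), z ℓ)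
    (hthincov : ∀ e ∈ G.edgeSet, ∑ ℓ ∈ L.filter (· ∈ covE G hG e), z ℓ ≤ 2 / ε)
    (hnothin : ∀ p q : V, G.Adj p q → ¬ ThinEdge G L c z (4 * M / ε ^ 2) p q) :
    ∃ u : V, ∀ K : Set V, IsCompAt G u K →
      (leafCount G K : ℝ) ≤ 48 * M / ε ^ 2 ∧
      ∑ ℓ ∈ L.filter (fun ℓ => ℓ.1 ∈ K ∧ ℓ.2 ∈ K), c ℓ * z ℓ ≤ 48 * M / ε ^ 2 := by
  have : Nonempty V := hG.connected.nonempty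
  obtain ⟨u, hu⟩ := hG.isAcyclic.exists_forall_adj_not
    (fun a b => 4 * M / ε ^ 2 ≤
      ∑ ℓ ∈ L.filter (fun ℓ => ℓ.1 ∈ sideOf G b a ∧ ℓ.2 ∈ sideOf G b a), c ℓ * z ℓ)
    fun a b hab h₁ h₂ => hnothin a b hab ⟨h₂, h₁⟩
  refine ⟨u, fun K hK => ?_⟩
  obtain ⟨v, huv, rfl⟩ := hG.exists_adj_eq_sideOf_of_isCompAt hK
  have hcost := not_le.mp (hu v huv)
  have hz_le_cost : ∑ ℓ ∈ L.filter (fun ℓ => ℓ.1 ∈ sideOf G v u ∧ ℓ.2 ∈ sideOf G v u), z ℓ ≤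
      ∑ ℓ ∈ L.filter (fun ℓ => ℓ.1 ∈ sideOf G v u ∧ ℓ.2 ∈ sideOf G v u), c ℓ * z ℓ :=
    sum_le_sum fun ℓ hℓ => le_mul_of_one_le_left (hz0 ℓ) (hc ℓ (mem_filter.mp hℓ).1).1
  have h6 : 6 / ε ≤ 36 * M / ε ^ 2 := by
    rw [div_le_div_iff₀ hε (by positivity)]
    nlinarith
  refine ⟨?_, hcost.le.trans (by gcongr; norm_num)⟩
  calc (leafCount G (sideOf G v u) : ℝ)
      ≤ 3 * ∑ ℓ ∈ L.filter (fun ℓ => ℓ.1 ∈ sideOf G v u ∧ ℓ.2 ∈ sideOf G v u), c ℓ * z ℓ +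
          3 * (2 / ε) := by
        grw [leafCount_sideOf_le hG L z hz0 hfeas huv, hz_le_cost, hthincov s(v, u) huv.symm]
    _ ≤ 3 * (4 * M / ε ^ 2) + 6 / ε := by linarith [show 3 * (2 / ε) = 6 / ε by ring]
    _ ≤ 48 * M / ε ^ 2 := by
        linarith [show 48 * M / ε ^ 2 = 3 * (4 * M / ε ^ 2) + 36 * M / ε ^ 2 by ring]

/-- If `(T, z)` satisfies thin coverage (`z(cov(e)) ≤ 2/ε` for every
edge), costs lie in `[1, M]`, and `T` has no `(4M/ε²)`-thin edge w.r.t. `z`, then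
`(T, z)` is `(48M/ε²)`-simple: there is a node `u` whose removal splits `T` into trees
each having at most `48M/ε²` leaves and internal fractional cost at most `48M/ε²`. -/
theorem no_thin_edge_implies_simple {V : Type*} [Fintype V] [DecidableEq V]
    (G : SimpleGraph V) (hG : G.IsTree) (L : Finset (V × V)) (c z : V × V → ℝ)
    (ε M : ℝ) (hε : 0 < ε) (hε1 : ε ≤ 1) (hM : 1 ≤ M)
    (hc : ∀ ℓ ∈ L, 1 ≤ c ℓ ∧ c ℓ ≤ M) (hz0 : ∀ ℓ, 0 ≤ z ℓ)
    (hfeas : ∀ e ∈ G.edgeSet, 1 ≤ ∑ ℓ ∈ L.filter (· ∈ covE G hG e), z ℓ)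
    (hthincov : ∀ e ∈ G.edgeSet, ∑ ℓ ∈ L.filter (· ∈ covE G hG e), z ℓ ≤ 2 / ε)
    (hnothin : ∀ p q : V, G.Adj p q → ¬ ThinEdge G L c z (4 * M / ε ^ 2) p q) :
    ∃ u : V, ∀ K : Set V, IsCompAt G u K →
      (leafCount G K : ℝ) ≤ 48 * M / ε ^ 2 ∧
      ∑ ℓ ∈ L.filter (fun ℓ => ℓ.1 ∈ K ∧ ℓ.2 ∈ K), c ℓ * z ℓ ≤ 48 * M / ε ^ 2 :=
  no_thin_edge_implies_simple_general G hG L c z ε M hε hε1 hM hc hz0 hfeas hthincov hnothin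
end

section
/- (TAP rounding bound) For an unweighted tree augmentation instance on a tree T rooted at r, with feasible fractional solution z split into in-links z^{in} and cross-links z^{cr}, there exists a feasible set of links S with |S| ≤ 2·z^{in}(L) + (3/2)·z^{cr}(L). -/
open SimpleGraph
open scoped Classical

/-- A cross-link w.r.t. the root `r`: its endpoints lie in two different components of
`T − r` (so its tree path passes through `r`). Other links are in-links. -/
def CrossLink {V : Type*} (G : SimpleGraph V) (r : V) (ℓ : V × V) : Prop :=
  ℓ.1 ≠ r ∧ ℓ.2 ≠ r ∧ ¬ (G.deleteEdges {e | r ∈ e}).Reachable ℓ.1 ℓ.2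

/-- The in-link part `z^{in}` of `z`. -/
noncomputable def inPart {V : Type*} (G : SimpleGraph V) (r : V) (z : V × V → ℝ) :
    V × V → ℝ := fun ℓ => if CrossLink G r ℓ then 0 else z ℓ

/-- The cross-link part `z^{cr}` of `z`. -/
noncomputable def crPart {V : Type*} (G : SimpleGraph V) (r : V) (z : V × V → ℝ) :
    V × V → ℝ := fun ℓ => if CrossLink G r ℓ then z ℓ else 0

/-!
Process the tree edges from the deepest upwards and keep an edge as a trigger unless it lies
above a kept trigger with which it shares a link. For each trigger, the link covering it that
reaches highest towards the root covers every edge its trigger is responsible for, and no link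
covers two triggers on one root path, so every link covers at most two triggers.

A cross-link passes through the root, hence covers the whole root paths of the triggers it
covers. Match triggers whose root paths are covered by a common link, and buy one link per
matched pair and one per unmatched trigger. Weighting unmatched triggers by 1 and matched ones
by 1/2, an in-link carries weight at most 2 and a cross-link (two covered triggers, at most one
unmatched) at most 3/2; feasibility of `z` and double counting give the bound.
-/

namespace TreeAugmentation

section Pairing

variable {α β : Type*}

lemma sum_le_sum_mul_of_fractional_cover (cov : β → α → Prop) (T : Finset α) (L : Finset β)
    (w : α → ℝ) (z c : β → ℝ) (hw : ∀ a ∈ T, 0 ≤ w a) (hz : ∀ l ∈ L, 0 ≤ z l)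
    (hcov : ∀ a ∈ T, 1 ≤ ∑ l ∈ L.filter (cov · a), z l)
    (hc : ∀ l ∈ L, ∑ a ∈ T.filter (cov l), w a ≤ c l) :
    ∑ a ∈ T, w a ≤ ∑ l ∈ L, z l * c l := calc
  ∑ a ∈ T, w a ≤ ∑ a ∈ T, w a * ∑ l ∈ L.filter (cov · a), z l :=
    Finset.sum_le_sum fun a ha => le_mul_of_one_le_right (hw a ha) (hcov a ha)
  _ = ∑ l ∈ L, z l * ∑ a ∈ T.filter (cov l), w a := by
    simp only [Finset.sum_filter, Finset.mul_sum, mul_ite, mul_zero]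
    rw [Finset.sum_comm]
    exact Finset.sum_congr rfl fun l _ => Finset.sum_congr rfl fun a _ => by split_ifs <;> ring
  _ ≤ ∑ l ∈ L, z l * c l :=
    Finset.sum_le_sum fun l hl => mul_le_mul_of_nonneg_left (hc l hl) (hz l hl)

variable [DecidableEq α]

noncomputable def pairSupport (P : Finset (α × α)) : Finset α := P.biUnion fun p => {p.1, p.2}

lemma exists_maximal_matching (R : α → α → Prop) (H : Finset α) :
    ∃ P : Finset (α × α), (∀ p ∈ P, R p.1 p.2) ∧ pairSupport P ⊆ H ∧
      (pairSupport P).card = 2 * P.card ∧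
      ∀ a ∈ H \ pairSupport P, ∀ b ∈ H \ pairSupport P, a ≠ b → ¬ R a b := by
  induction H using Finset.strongInduction with
  | H H ih =>
  by_cases hex : ∃ a ∈ H, ∃ b ∈ H, a ≠ b ∧ R a b
  · obtain ⟨a, ha, b, hb, hab, hR⟩ := hex
    obtain ⟨P, hPR, hPH, hPcard, hPmax⟩ :=
      ih (H \ {a, b}) (Finset.sdiff_ssubset (Finset.insert_subset ha
        (Finset.singleton_subset_iff.2 hb)) (Finset.insert_nonempty _ _))
    have hsupp : pairSupport (insert (a, b) P) = {a, b} ∪ pairSupport P :=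
      Finset.biUnion_insert
    have hdisj : Disjoint {a, b} (pairSupport P) :=
      Finset.disjoint_of_subset_right hPH Finset.disjoint_sdiff
    have hnot : (a, b) ∉ P := fun h => Finset.disjoint_left.1 hdisj (Finset.mem_insert_self _ _)
      (Finset.mem_biUnion.2 ⟨_, h, Finset.mem_insert_self _ _⟩)
    refine ⟨insert (a, b) P, (Finset.forall_mem_insert _ _ _).2 ⟨hR, hPR⟩, ?_, ?_, ?_⟩
    · rw [hsupp]
      exact Finset.union_subset (Finset.insert_subset ha (Finset.singleton_subset_iff.2 hb))
        (hPH.trans Finset.sdiff_subset)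
    · rw [hsupp, Finset.card_union_of_disjoint hdisj, Finset.card_insert_of_notMem hnot, hPcard,
        Finset.card_pair hab]
      ring
    · rw [hsupp]
      exact fun x hx y hy => hPmax x (by rwa [sdiff_sdiff_left]) y (by rwa [sdiff_sdiff_left])
  · push Not at hex
    refine ⟨∅, by simp, by simp [pairSupport], by simp [pairSupport], fun a ha b hb => ?_⟩
    exact hex a (Finset.mem_sdiff.1 ha).1 b (Finset.mem_sdiff.1 hb).1

lemma exists_subset_card_le_of_pairs (cov : β → α → Prop) (L : Finset β) (T : Finset α)
    (P : Finset (α × α)) (hT : ∀ a ∈ T, ∃ l ∈ L, cov l a)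
    (hP : ∀ p ∈ P, ∃ l ∈ L, cov l p.1 ∧ cov l p.2) :
    ∃ S ⊆ L, (∀ a ∈ T, ∃ l ∈ S, cov l a) ∧
      S.card ≤ (T \ pairSupport P).card + P.card := by
  choose f hfL hf using hT
  choose g hgL hg using hP
  let single := (T \ pairSupport P).attach.image fun a => f a.1 (Finset.mem_sdiff.1 a.2).1
  let double := P.attach.image fun p => g p.1 p.2
  refine ⟨single ∪ double, ?_, fun a ha => ?_, ?_⟩
  · exact Finset.union_subset (Finset.image_subset_iff.2 fun a _ => hfL _ _)
      (Finset.image_subset_iff.2 fun p _ => hgL _ _)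
  · by_cases hap : a ∈ pairSupport P
    · obtain ⟨p, hp, hap⟩ := Finset.mem_biUnion.1 hap
      refine ⟨g p hp,
        Finset.mem_union_right _ (Finset.mem_image.2 ⟨⟨p, hp⟩, by simp, rfl⟩), ?_⟩
      rcases Finset.mem_insert.1 hap with rfl | hap
      exacts [(hg p hp).1, Finset.mem_singleton.1 hap ▸ (hg p hp).2]
    · exact ⟨_, Finset.mem_union_left _ (Finset.mem_image.2
        ⟨⟨a, Finset.mem_sdiff.2 ⟨ha, hap⟩⟩, by simp, rfl⟩), hf a ha⟩
  · calc _ ≤ single.card + double.card := Finset.card_union_le _ _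
      _ ≤ _ := add_le_add (Finset.card_image_le.trans (Finset.card_attach).le)
          (Finset.card_image_le.trans (Finset.card_attach).le)

/-- Each pair of a matching is paid for half by each of its ends. -/
noncomputable def pairWeight (P : Finset (α × α)) (a : α) : ℝ :=
  if a ∈ pairSupport P then 1 / 2 else 1

lemma pairWeight_nonneg (P : Finset (α × α)) (a : α) : 0 ≤ pairWeight P a := by
  unfold pairWeight; split_ifs <;> norm_num

lemma pairWeight_le_one (P : Finset (α × α)) (a : α) : pairWeight P a ≤ 1 := by
  unfold pairWeight; split_ifs <;> norm_num

lemma sum_pairWeight {T : Finset α} {P : Finset (α × α)} (hPT : pairSupport P ⊆ T)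
    (hP : (pairSupport P).card = 2 * P.card) :
    ∑ a ∈ T, pairWeight P a = (T \ pairSupport P).card + P.card := by
  unfold pairWeight
  rw [Finset.sum_ite, Finset.filter_mem_eq_inter,
    Finset.inter_eq_right.2 hPT, Finset.filter_notMem_eq_sdiff]
  simp only [Finset.sum_const, nsmul_eq_mul, hP]
  push_cast
  ring

end Pairing

variable {V : Type*} {G : SimpleGraph V} (hG : G.IsTree)

lemma isPath_tpath (u v : V) : (tpath G hG u v).IsPath :=
  (hG.existsUnique_path u v).choose_spec.1

lemma eq_tpath {u v : V} {p : G.Walk u v} (hp : p.IsPath) : p = tpath G hG u v :=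
  (hG.existsUnique_path u v).choose_spec.2 p hp

lemma edges_tpath_subset {u v : V} (p : G.Walk u v) : (tpath G hG u v).edges ⊆ p.edges := by
  rw [← eq_tpath hG p.bypass_isPath]
  exact p.edges_bypass_subset_edges

lemma edges_tpath_subset_of_mem_support {a b u w : V} (hu : u ∈ (tpath G hG a b).support)
    (hw : w ∈ (tpath G hG a b).support) : (tpath G hG u w).edges ⊆ (tpath G hG a b).edges := by
  intro e he
  have := edges_tpath_subset hG (((tpath G hG a b).takeUntil u hu).reverse.append
    ((tpath G hG a b).takeUntil w hw)) he
  rw [Walk.edges_append, Walk.edges_reverse, List.mem_append, List.mem_reverse] at this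
  exact this.elim (fun h => (tpath G hG a b).edges_takeUntil_subset_edges hu h)
    (fun h => (tpath G hG a b).edges_takeUntil_subset_edges hw h)

variable (r : V)

noncomputable def rootEdges (v : V) : List (Sym2 V) := (tpath G hG v r).edges

lemma rootEdges_root : rootEdges hG r r = [] := by
  rw [rootEdges, ← eq_tpath hG (Walk.IsPath.nil (u := r))]
  rfl

lemma edges_tpath_subset_rootEdges (u v : V) :
    (tpath G hG u v).edges ⊆ rootEdges hG r u ++ rootEdges hG r v := by
  intro e he
  have := edges_tpath_subset hG ((tpath G hG u r).append (tpath G hG v r).reverse) he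
  rwa [Walk.edges_append, Walk.edges_reverse, List.mem_append, List.mem_reverse,
    ← List.mem_append] at this

lemma exists_rootEdges_eq_cons {v : V} (hv : v ≠ r) :
    ∃ w, rootEdges hG r v = s(v, w) :: rootEdges hG r w := by
  obtain ⟨w, h, p, hp⟩ := (tpath G hG v r).exists_eq_cons_of_ne hv
  have hpath := isPath_tpath hG v r
  rw [hp] at hpath
  refine ⟨w, ?_⟩
  rw [rootEdges, rootEdges, hp, ← eq_tpath hG hpath.of_cons, Walk.edges_cons]

lemma exists_rootEdges_eq_of_suffix_edges {v : V} (p : G.Walk v r) (hp : p.IsPath) :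
    ∀ {l : List (Sym2 V)}, l <:+ p.edges → ∃ u, rootEdges hG r u = l := by
  induction p with
  | nil => exact fun hl => ⟨_, by rw [rootEdges_root, List.suffix_nil.1 hl]⟩
  | @cons u w _ hadj q ih =>
    intro l hl
    rw [Walk.edges_cons, List.suffix_cons_iff] at hl
    rcases hl with rfl | hl
    · exact ⟨u, by rw [rootEdges, ← eq_tpath hG hp, Walk.edges_cons]⟩
    · exact ih hp.of_cons hl

lemma eq_of_rootEdges_eq_cons {u v : V} {e : Sym2 V} {l l' : List (Sym2 V)}
    (hu : rootEdges hG r u = e :: l) (hv : rootEdges hG r v = e :: l') : u = v := by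
  have hne : ∀ {x : V} {l : List (Sym2 V)}, rootEdges hG r x = e :: l → x ≠ r := by
    rintro x l hx rfl
    simp [rootEdges_root] at hx
  obtain ⟨x, hx⟩ := exists_rootEdges_eq_cons hG r (hne hu)
  obtain ⟨y, hy⟩ := exists_rootEdges_eq_cons hG r (hne hv)
  have hxy : s(u, x) = s(v, y) := by
    rw [hu] at hx; rw [hv] at hy
    exact (List.cons_eq_cons.1 hx).1.symm.trans (List.cons_eq_cons.1 hy).1
  rcases Sym2.eq_iff.1 hxy with ⟨h, -⟩ | ⟨rfl, rfl⟩
  · exact h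
  · -- otherwise each of `u`, `v` would be the other's parent
    have h1 := congrArg List.length hx
    have h2 := congrArg List.length hy
    simp only [List.length_cons] at h1 h2
    omega

lemma exists_rootEdges_eq_cons_of_mem {v : V} {e : Sym2 V} (h : e ∈ rootEdges hG r v) :
    ∃ u l, rootEdges hG r u = e :: l ∧ e :: l <:+ rootEdges hG r v := by
  obtain ⟨s, t, hst⟩ := List.mem_iff_append.1 h
  have hsuf : e :: t <:+ rootEdges hG r v := ⟨s, hst.symm⟩
  obtain ⟨u, hu⟩ := exists_rootEdges_eq_of_suffix_edges hG r _ (isPath_tpath hG v r) hsuf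
  exact ⟨u, t, hu, hsuf⟩

/-- The endpoint of the tree edge `e` farther from the root (junk value `r` off the tree). -/
noncomputable def lower (e : Sym2 V) : V :=
  if h : ∃ u l, rootEdges hG r u = e :: l then h.choose else r

lemma mem_rootEdges_of_mem_edgeSet {e : Sym2 V} (he : e ∈ G.edgeSet) :
    ∃ v, e ∈ rootEdges hG r v := by
  induction e using Sym2.ind with
  | _ u w =>
    have hadj : G.Adj u w := he
    have hmem : s(u, w) ∈ (tpath G hG u w).edges := by
      rw [← eq_tpath hG (Walk.IsPath.of_adj hadj), Adj.edges_toWalk]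
      exact List.mem_cons_self
    rcases List.mem_append.1 (edges_tpath_subset_rootEdges hG r u w hmem) with h | h
    exacts [⟨u, h⟩, ⟨w, h⟩]

lemma rootEdges_lower {e : Sym2 V} (he : e ∈ G.edgeSet) :
    ∃ l, rootEdges hG r (lower hG r e) = e :: l := by
  obtain ⟨v, hv⟩ := mem_rootEdges_of_mem_edgeSet hG r he
  obtain ⟨u, l, hu, -⟩ := exists_rootEdges_eq_cons_of_mem hG r hv
  have h : ∃ u l, rootEdges hG r u = e :: l := ⟨u, l, hu⟩
  rw [lower, dif_pos h]
  exact h.choose_spec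

lemma mem_edgeSet_of_mem_rootEdges {v : V} {e : Sym2 V} (h : e ∈ rootEdges hG r v) :
    e ∈ G.edgeSet :=
  (tpath G hG v r).edges_subset_edgeSet h

lemma mem_rootEdges_lower {e : Sym2 V} (he : e ∈ G.edgeSet) :
    e ∈ rootEdges hG r (lower hG r e) := by
  obtain ⟨l, hl⟩ := rootEdges_lower hG r he
  rw [hl]
  exact List.mem_cons_self

lemma lower_mem {e : Sym2 V} (he : e ∈ G.edgeSet) : lower hG r e ∈ e := by
  obtain ⟨l, hl⟩ := rootEdges_lower hG r he
  have hr : lower hG r e ≠ r := by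
    intro h
    rw [h, rootEdges_root] at hl
    exact List.cons_ne_nil _ _ hl.symm
  obtain ⟨w, hw⟩ := exists_rootEdges_eq_cons hG r hr
  rw [hl] at hw
  have h : lower hG r e ∈ s(lower hG r e, w) := Sym2.mem_mk_left _ _
  rwa [← (List.cons_eq_cons.1 hw).1] at h

lemma rootEdges_lower_suffix {v : V} {e : Sym2 V} (h : e ∈ rootEdges hG r v) :
    rootEdges hG r (lower hG r e) <:+ rootEdges hG r v := by
  obtain ⟨u, l, hu, hsuf⟩ := exists_rootEdges_eq_cons_of_mem hG r h
  obtain ⟨l', hl'⟩ := rootEdges_lower hG r (mem_edgeSet_of_mem_rootEdges hG r h)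
  rwa [eq_of_rootEdges_eq_cons hG r hl' hu, hu]

lemma eq_of_mem_rootEdges_lower {e f : Sym2 V} (hef : e ∈ rootEdges hG r (lower hG r f))
    (hfe : f ∈ rootEdges hG r (lower hG r e)) : e = f := by
  obtain ⟨l, hl⟩ := rootEdges_lower hG r (mem_edgeSet_of_mem_rootEdges hG r hfe)
  obtain ⟨l', hl'⟩ := rootEdges_lower hG r (mem_edgeSet_of_mem_rootEdges hG r hef)
  have h1 := rootEdges_lower_suffix hG r hef
  have h2 := rootEdges_lower_suffix hG r hfe
  have := h1.eq_of_length (le_antisymm h1.length_le h2.length_le)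
  rw [hl, hl'] at this
  exact (List.cons_eq_cons.1 this).1

lemma length_rootEdges_lower_lt {e f : Sym2 V} (he : e ∈ G.edgeSet)
    (hfe : f ∈ rootEdges hG r (lower hG r e)) (hne : f ≠ e) :
    (rootEdges hG r (lower hG r f)).length < (rootEdges hG r (lower hG r e)).length := by
  have h := rootEdges_lower_suffix hG r hfe
  refine h.length_le.lt_of_ne fun hlen => hne (eq_of_mem_rootEdges_lower hG r hfe ?_)
  rw [h.eq_of_length hlen]
  exact mem_rootEdges_lower hG r he

lemma mem_rootEdges_lower_or_mem {v : V} {e f : Sym2 V} (he : e ∈ rootEdges hG r v)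
    (hf : f ∈ rootEdges hG r v) :
    e ∈ rootEdges hG r (lower hG r f) ∨ f ∈ rootEdges hG r (lower hG r e) := by
  rcases List.suffix_or_suffix_of_suffix (rootEdges_lower_suffix hG r he)
    (rootEdges_lower_suffix hG r hf) with h | h
  · exact .inl (h.subset (mem_rootEdges_lower hG r (mem_edgeSet_of_mem_rootEdges hG r he)))
  · exact .inr (h.subset (mem_rootEdges_lower hG r (mem_edgeSet_of_mem_rootEdges hG r hf)))

lemma rootEdges_eq_append {v x : V} (hx : x ∈ (tpath G hG v r).support) :
    rootEdges hG r v = (tpath G hG v x).edges ++ rootEdges hG r x := by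
  have hp := isPath_tpath hG v r
  have h := congrArg Walk.edges ((tpath G hG v r).take_spec hx)
  rw [Walk.edges_append, eq_tpath hG (hp.takeUntil hx), eq_tpath hG (hp.dropUntil hx)] at h
  exact h.symm

/-- `g ∈ rootEdges hG r (lower hG r f)` says that `g` lies on or above `f`: a tree path through
`e` and through `g` above it passes through every edge in between. -/
lemma mem_edges_of_between {a b : V} {e f g : Sym2 V} (he : e ∈ (tpath G hG a b).edges)
    (hg : g ∈ (tpath G hG a b).edges) (hf : f ∈ rootEdges hG r (lower hG r e))
    (hgf : g ∈ rootEdges hG r (lower hG r f)) : f ∈ (tpath G hG a b).edges := by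
  by_cases hfg : f ∈ rootEdges hG r (lower hG r g)
  · rwa [eq_of_mem_rootEdges_lower hG r hfg hgf]
  have hgE := mem_edgeSet_of_mem_rootEdges hG r hgf
  have hlower_mem : ∀ {x : Sym2 V}, x ∈ (tpath G hG a b).edges →
      lower hG r x ∈ (tpath G hG a b).support := fun hx =>
    Walk.mem_support_of_mem_edges hx (lower_mem hG r ((tpath G hG a b).edges_subset_edgeSet hx))
  have hg_sup : lower hG r g ∈ (tpath G hG (lower hG r e) r).support :=
    Walk.mem_support_of_mem_edges ((rootEdges_lower_suffix hG r hf).subset hgf)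
      (lower_mem hG r hgE)
  have hf' := hf
  rw [rootEdges_eq_append hG r hg_sup, List.mem_append] at hf'
  exact edges_tpath_subset_of_mem_support hG (hlower_mem he) (hlower_mem hg)
    (hf'.resolve_right hfg)

lemma root_mem_support_of_crossLink {l : V × V} (hl : CrossLink G r l) :
    r ∈ (tpath G hG l.1 l.2).support := by
  by_contra h
  exact hl.2.2 ⟨(tpath G hG l.1 l.2).toDeleteEdges {e | r ∈ e}
    fun _ he hre => h (Walk.mem_support_of_mem_edges he hre)⟩

lemma covE_of_crossLink {l : V × V} (hl : CrossLink G r l) {e : Sym2 V}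
    (he : l ∈ covE G hG e) : ∀ f ∈ rootEdges hG r (lower hG r e), l ∈ covE G hG f :=
  fun _ hf => edges_tpath_subset_of_mem_support hG
    (Walk.mem_support_of_mem_edges he
      (lower_mem hG r ((tpath G hG l.1 l.2).edges_subset_edgeSet he)))
    (root_mem_support_of_crossLink hG r hl) hf

variable (L : Finset (V × V))

def CoversAbove (l : V × V) (a : Sym2 V) : Prop :=
  ∀ f ∈ rootEdges hG r (lower hG r a),
    (∃ l' ∈ L, l' ∈ covE G hG a ∧ l' ∈ covE G hG f) → l ∈ covE G hG f

/-- Take a link covering `a` that covers the most edges of the root path of `a`: as tree paths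
meet this root path in initial segments, it covers whatever another link covering `a` covers
there. -/
lemma exists_coversAbove {a : Sym2 V} (ha : ∃ l ∈ L, l ∈ covE G hG a) :
    ∃ l ∈ L, CoversAbove hG r L l a := by
  let covered (l : V × V) : Finset (Sym2 V) :=
    (rootEdges hG r (lower hG r a)).toFinset.filter (l ∈ covE G hG ·)
  obtain ⟨l, hl, hmax⟩ := Finset.exists_max_image (L.filter (· ∈ covE G hG a))
    (fun l => (covered l).card) (by simpa [Finset.Nonempty] using ha)
  rw [Finset.mem_filter] at hl
  refine ⟨l, hl.1, fun f hf ⟨l', hl', hal', hfl'⟩ => by_contra fun hfl => ?_⟩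
  have hsub : covered l ⊆ covered l' := by
    intro g hg
    simp only [covered, Finset.mem_filter, List.mem_toFinset] at hg ⊢
    refine ⟨hg.1, ?_⟩
    rcases mem_rootEdges_lower_or_mem hG r hg.1 hf with h | h
    · exact absurd (mem_edges_of_between hG r hl.2 hg.2 hf h) hfl
    · exact mem_edges_of_between hG r hal' hfl' hg.1 h
  have hlt : (covered l).card < (covered l').card := Finset.card_lt_card <|
    (Finset.ssubset_iff_of_subset hsub).2
      ⟨f, by simp [covered, hf, hfl'], by simp [covered, hfl]⟩
  exact (hmax l' (Finset.mem_filter.2 ⟨hl', hal'⟩)).not_gt hlt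

def CommonRootCover (a b : Sym2 V) : Prop :=
  ∃ l ∈ L, ∀ f ∈ rootEdges hG r (lower hG r a) ++ rootEdges hG r (lower hG r b),
    l ∈ covE G hG f

lemma CommonRootCover.exists_coversAbove {a b : Sym2 V} (h : CommonRootCover hG r L a b) :
    ∃ l ∈ L, CoversAbove hG r L l a ∧ CoversAbove hG r L l b := by
  obtain ⟨l, hl, hab⟩ := h
  exact ⟨l, hl, fun f hf _ => hab f (List.mem_append_left _ hf),
    fun f hf _ => hab f (List.mem_append_right _ hf)⟩

def ChainIndependent (T : Finset (Sym2 V)) : Prop :=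
  ∀ a ∈ T, ∀ b ∈ T, a ≠ b → b ∈ rootEdges hG r (lower hG r a) →
    ∀ l ∈ L, l ∈ covE G hG a → l ∉ covE G hG b

/-- Greedy choice, shallowest edges last: an edge is added unless it lies above a chosen edge
with which it shares a link. -/
lemma exists_chainIndependent (E : Finset (Sym2 V))
    (hE : ∀ e ∈ E, ∃ l ∈ L, l ∈ covE G hG e) :
    ∃ T ⊆ E, ChainIndependent hG r L T ∧ ∀ e ∈ E, ∃ a ∈ T, e ∈ rootEdges hG r (lower hG r a) ∧
      ∃ l ∈ L, l ∈ covE G hG a ∧ l ∈ covE G hG e := by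
  induction E using Finset.induction_on_min_value
    (fun e => (rootEdges hG r (lower hG r e)).length) with
  | empty => exact ⟨∅, subset_rfl, by simp [ChainIndependent], by simp⟩
  | insert e E _ hmin ih =>
    obtain ⟨T, hTE, hT, hdom⟩ := ih fun f hf => hE f (Finset.mem_insert_of_mem hf)
    have hdom' : ∀ f ∈ E, ∃ a ∈ insert e T, f ∈ rootEdges hG r (lower hG r a) ∧
        ∃ l ∈ L, l ∈ covE G hG a ∧ l ∈ covE G hG f := fun f hf => by
      obtain ⟨a, ha, h⟩ := hdom f hf
      exact ⟨a, Finset.mem_insert_of_mem ha, h⟩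
    by_cases h : ∃ a ∈ T, e ∈ rootEdges hG r (lower hG r a) ∧
      ∃ l ∈ L, l ∈ covE G hG a ∧ l ∈ covE G hG e
    · exact ⟨T, hTE.trans (Finset.subset_insert _ _), hT,
        (Finset.forall_mem_insert _ _ _).2 ⟨h, hdom⟩⟩
    push Not at h
    obtain ⟨l, hl, hle⟩ := hE e (Finset.mem_insert_self _ _)
    have he : e ∈ G.edgeSet := (tpath G hG l.1 l.2).edges_subset_edgeSet hle
    refine ⟨insert e T, Finset.insert_subset_insert _ hTE, ?_,
      (Finset.forall_mem_insert _ _ _).2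
        ⟨⟨e, Finset.mem_insert_self _ _, mem_rootEdges_lower hG r he, l, hl, hle, hle⟩, hdom'⟩⟩
    intro a ha b hb hab hba l' hl' hal'
    rcases Finset.mem_insert.1 ha with rfl | haT <;> rcases Finset.mem_insert.1 hb with rfl | hbT
    · exact absurd rfl hab
    · exact absurd (hmin b (hTE hbT))
        (length_rootEdges_lower_lt hG r he hba (Ne.symm hab)).not_ge
    · exact h a haT hba l' hl' hal'
    · exact hT a haT b hbT hab hba l' hl' hal'

variable {hG r L}

lemma ChainIndependent.card_filter_covE_le_one {T : Finset (Sym2 V)}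
    (hT : ChainIndependent hG r L T) {l : V × V} (hl : l ∈ L) (v : V) :
    (T.filter fun e => l ∈ covE G hG e ∧ e ∈ rootEdges hG r v).card ≤ 1 := by
  refine Finset.card_le_one.2 fun a ha b hb => by_contra fun hab => ?_
  simp only [Finset.mem_filter] at ha hb
  rcases mem_rootEdges_lower_or_mem hG r ha.2.2 hb.2.2 with h | h
  · exact hT b hb.1 a ha.1 (Ne.symm hab) h l hl hb.2.1 ha.2.1
  · exact hT a ha.1 b hb.1 hab h l hl ha.2.1 hb.2.1

lemma ChainIndependent.card_filter_covE_le_two {T : Finset (Sym2 V)}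
    (hT : ChainIndependent hG r L T) {l : V × V} (hl : l ∈ L) :
    (T.filter (l ∈ covE G hG ·)).card ≤ 2 := by
  have hsub : T.filter (l ∈ covE G hG ·) ⊆
      (T.filter fun e => l ∈ covE G hG e ∧ e ∈ rootEdges hG r l.1) ∪
        T.filter fun e => l ∈ covE G hG e ∧ e ∈ rootEdges hG r l.2 := by
    intro e he
    rw [Finset.mem_filter] at he
    have := List.mem_append.1 (edges_tpath_subset_rootEdges hG r l.1 l.2 he.2)
    simp only [Finset.mem_union, Finset.mem_filter]
    tauto
  calc _ ≤ _ := Finset.card_le_card hsub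
    _ ≤ _ := Finset.card_union_le _ _
    _ ≤ 1 + 1 := add_le_add (hT.card_filter_covE_le_one hl _) (hT.card_filter_covE_le_one hl _)

lemma ChainIndependent.sum_pairWeight_le {T : Finset (Sym2 V)} (hT : ChainIndependent hG r L T)
    {P : Finset (Sym2 V × Sym2 V)} (hP : ∀ a ∈ T \ pairSupport P, ∀ b ∈ T \ pairSupport P,
      a ≠ b → ¬ CommonRootCover hG r L a b) {l : V × V} (hl : l ∈ L) :
    ∑ a ∈ T.filter (l ∈ covE G hG ·), pairWeight P a ≤
      if CrossLink G r l then 3 / 2 else 2 := by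
  set C := T.filter (l ∈ covE G hG ·)
  have hC : (C.card : ℝ) ≤ 2 := by exact_mod_cast hT.card_filter_covE_le_two hl
  split_ifs with hcross
  · have hfree : (C.filter (· ∉ pairSupport P)).card ≤ 1 := by
      refine Finset.card_le_one.2 fun a ha b hb => by_contra fun hab => ?_
      simp only [C, Finset.mem_filter] at ha hb
      refine hP a (Finset.mem_sdiff.2 ⟨ha.1.1, ha.2⟩) b (Finset.mem_sdiff.2 ⟨hb.1.1, hb.2⟩)
        hab ⟨l, hl, fun f hf => ?_⟩
      rcases List.mem_append.1 hf with hf | hf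
      exacts [covE_of_crossLink hG r hcross ha.1.2 f hf, covE_of_crossLink hG r hcross hb.1.2 f hf]
    have hsplit := Finset.card_filter_add_card_filter_not (s := C) (· ∈ pairSupport P)
    have hsplit' : ((C.filter (· ∈ pairSupport P)).card : ℝ) +
        (C.filter (· ∉ pairSupport P)).card = C.card := by exact_mod_cast hsplit
    have hfree' : ((C.filter (· ∉ pairSupport P)).card : ℝ) ≤ 1 := by exact_mod_cast hfree
    unfold pairWeight
    rw [Finset.sum_ite]
    simp only [Finset.sum_const, nsmul_eq_mul, mul_one]
    linarith
  · calc ∑ a ∈ C, pairWeight P a ≤ ∑ _a ∈ C, (1 : ℝ) :=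
          Finset.sum_le_sum fun a _ => pairWeight_le_one P a
      _ ≤ 2 := by simpa using hC

lemma sum_mul_ite_crossLink (z : V × V → ℝ) :
    ∑ l ∈ L, z l * (if CrossLink G r l then 3 / 2 else 2) =
      2 * ∑ l ∈ L, inPart G r z l + 3 / 2 * ∑ l ∈ L, crPart G r z l := by
  simp only [inPart, crPart, Finset.mul_sum, ← Finset.sum_add_distrib]
  exact Finset.sum_congr rfl fun l _ => by split_ifs <;> ring

end TreeAugmentation

open TreeAugmentation

theorem tap_rounding_bound_general {V : Type*}
    (G : SimpleGraph V) (hG : G.IsTree) (r : V) (L : Finset (V × V)) (z : V × V → ℝ)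
    (hz0 : ∀ ℓ, 0 ≤ z ℓ)
    (hfeas : ∀ e ∈ G.edgeSet, 1 ≤ ∑ ℓ ∈ L.filter (· ∈ covE G hG e), z ℓ) :
    ∃ S ⊆ L, (∀ e ∈ G.edgeSet, ∃ ℓ ∈ S, e ∈ (tpath G hG ℓ.1 ℓ.2).edges) ∧
      (S.card : ℝ) ≤ 2 * (∑ ℓ ∈ L, inPart G r z ℓ) +
        (3 / 2) * ∑ ℓ ∈ L, crPart G r z ℓ := by
  set E := L.biUnion fun l => (tpath G hG l.1 l.2).edges.toFinset
  have hE : ∀ e ∈ E, ∃ l ∈ L, l ∈ covE G hG e := fun e he => by simpa [E, covE] using he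
  obtain ⟨T, hTE, hT, hdom⟩ := exists_chainIndependent hG r L E hE
  have hTfeas : ∀ a ∈ T, 1 ≤ ∑ ℓ ∈ L.filter (· ∈ covE G hG a), z ℓ := fun a ha => by
    obtain ⟨l, -, hl⟩ := hE a (hTE ha)
    exact hfeas a ((tpath G hG l.1 l.2).edges_subset_edgeSet hl)
  obtain ⟨P, hPR, hPT, hPcard, hPmax⟩ := exists_maximal_matching (CommonRootCover hG r L) T
  obtain ⟨S, hSL, hScov, hScard⟩ := exists_subset_card_le_of_pairs (CoversAbove hG r L) L T P
    (fun a ha => exists_coversAbove hG r L (hE a (hTE ha)))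
    (fun p hp => (hPR p hp).exists_coversAbove)
  refine ⟨S, hSL, fun e he => ?_, ?_⟩
  · obtain ⟨l, hl, -⟩ := Finset.exists_ne_zero_of_sum_ne_zero (by linarith [hfeas e he] :
      ∑ ℓ ∈ L.filter (· ∈ covE G hG e), z ℓ ≠ 0)
    obtain ⟨hl, hle⟩ := Finset.mem_filter.1 hl
    obtain ⟨a, haT, hea, hshare⟩ :=
      hdom e (Finset.mem_biUnion.2 ⟨l, hl, List.mem_toFinset.2 hle⟩)
    obtain ⟨s, hs, hsa⟩ := hScov a haT
    exact ⟨s, hs, hsa e hea hshare⟩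
  · calc (S.card : ℝ) ≤ (T \ pairSupport P).card + P.card := by exact_mod_cast hScard
      _ = ∑ a ∈ T, pairWeight P a := (sum_pairWeight hPT hPcard).symm
      _ ≤ ∑ l ∈ L, z l * if CrossLink G r l then 3 / 2 else 2 :=
        sum_le_sum_mul_of_fractional_cover (fun l a => l ∈ covE G hG a) T L _ z _
          (fun a _ => pairWeight_nonneg P a) (fun l _ => hz0 l) hTfeas
          (fun l hl => hT.sum_pairWeight_le hPmax hl)
      _ = _ := sum_mul_ite_crossLink z

/-- (TAP rounding bound.) For an unweighted (shadow-complete) tree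
augmentation instance on a tree `T` rooted at `r` with feasible fractional solution `z`,
there is a feasible set of links `S` with `|S| ≤ 2·z^{in}(L) + (3/2)·z^{cr}(L)`. -/
theorem tap_rounding_bound {V : Type*} [Fintype V] [DecidableEq V]
    (G : SimpleGraph V) (hG : G.IsTree) (r : V) (L : Finset (V × V)) (z : V × V → ℝ)
    (hz0 : ∀ ℓ, 0 ≤ z ℓ) (hzsupp : ∀ ℓ ∉ L, z ℓ = 0)
    (hsc : ∀ ℓ ∈ L, ∀ p q : V,
      (∀ e ∈ (tpath G hG p q).edges, e ∈ (tpath G hG ℓ.1 ℓ.2).edges) → (p, q) ∈ L)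
    (hfeas : ∀ e ∈ G.edgeSet, 1 ≤ ∑ ℓ ∈ L.filter (· ∈ covE G hG e), z ℓ) :
    ∃ S ⊆ L, (∀ e ∈ G.edgeSet, ∃ ℓ ∈ S, e ∈ (tpath G hG ℓ.1 ℓ.2).edges) ∧
      (S.card : ℝ) ≤ 2 * (∑ ℓ ∈ L, inPart G r z ℓ) +
        (3 / 2) * ∑ ℓ ∈ L, crPart G r z ℓ :=
  tap_rounding_bound_general G hG r L z hz0 hfeas
end

section
/- Let x be feasible for the cut LP on tree G, let E^h = {e : x(cov(e)) ≥ 2/ε} and let G^h be the tree obtained by contracting E(G) \ E^h. Then y = (ε/2)·x is feasible for the cut LP on G^h, and hence (via 2-approximate rounding) there exists L₀ ⊆ L covering all edges of E^h with c(L₀) ≤ ε·cᵀx. -/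
open SimpleGraph
open scoped Classical

/-!
The first claim is arithmetic: on a heavy edge `x` has coverage at least `2/ε`.

For the rounding, root the tree at `r` and split every link at the meet of its endpoints into
two up-links. Copying `y = (ε/2)·x` onto both halves keeps every heavy edge covered and doubles
the cost. Covering LPs of up-links are integral: pick the deepest edge `e` still to be covered,
subtract the cheapest cost `δ` of an up-link through `e` from all up-links through `e`, and recurse.
Feasibility at `e` means the fractional cost drops by at least `δ`. Two up-links through `e` are
nested above `e`, so an irredundant cover uses only one of them, and the integral cost drops by
at most `δ`. So an integral cover costs at most `2·cᵀy = ε·cᵀx`.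
-/

namespace SimpleGraph.IsTree

variable {V : Type*} {G : SimpleGraph V} (hG : G.IsTree)

lemma tpath_isPath (u v : V) : (tpath G hG u v).IsPath :=
  (hG.existsUnique_path u v).choose_spec.1

lemma eq_tpath {u v : V} {p : G.Walk u v} (hp : p.IsPath) : p = tpath G hG u v :=
  (hG.existsUnique_path u v).choose_spec.2 p hp

lemma tpath_self (u : V) : tpath G hG u u = Walk.nil :=
  (eq_tpath hG Walk.IsPath.nil).symm

lemma tpath_eq_cons_of_mem_support {u w v : V} (h : G.Adj w u)
    (hu : u ∈ (tpath G hG w v).support) : tpath G hG w v = Walk.cons h (tpath G hG u v) := by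
  have hp := tpath_isPath hG w v
  rw [← (tpath G hG w v).take_spec hu, eq_tpath hG (hp.takeUntil hu), eq_tpath hG (hp.dropUntil hu),
    ← eq_tpath hG (Walk.IsPath.of_adj h)]
  rfl

lemma tpath_eq_cons_of_notMem_support {u w v : V} (h : G.Adj u w)
    (hu : u ∉ (tpath G hG w v).support) : tpath G hG u v = Walk.cons h (tpath G hG w v) :=
  (eq_tpath hG ((tpath_isPath hG w v).cons hu)).symm

lemma mem_edges_tpath_iff_of_adj {u w : V} (h : G.Adj u w) (v : V) (f : Sym2 V) :
    f ∈ (tpath G hG u v).edges ↔ (f = s(u, w) ↔ f ∉ (tpath G hG w v).edges) := by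
  by_cases hu : u ∈ (tpath G hG w v).support
  · have hcons := tpath_eq_cons_of_mem_support hG h.symm hu
    have hnot := ((Walk.isTrail_cons _ _).1 (hcons ▸ (tpath_isPath hG w v).isTrail)).2
    rw [Sym2.eq_swap] at hnot
    rw [hcons, Walk.edges_cons, List.mem_cons, Sym2.eq_swap (a := w)]
    by_cases hf : f = s(u, w) <;> simp_all
  · have hcons := tpath_eq_cons_of_notMem_support hG h hu
    have hnot := ((Walk.isTrail_cons _ _).1 (hcons ▸ (tpath_isPath hG u v).isTrail)).2
    rw [hcons, Walk.edges_cons, List.mem_cons]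
    by_cases hf : f = s(u, w) <;> simp_all

variable (r : V)

noncomputable def parent (a : V) : V := (tpath G hG a r).snd

noncomputable def height (a : V) : ℕ := (tpath G hG a r).length

variable {r}

lemma exists_tpath_eq_cons_parent {a : V} (ha : a ≠ r) :
    ∃ h : G.Adj a (hG.parent r a), tpath G hG a r = Walk.cons h (tpath G hG (hG.parent r a) r) := by
  have hnil := Walk.not_nil_of_ne (p := tpath G hG a r) ha
  refine ⟨Walk.adj_snd hnil, ?_⟩
  conv_lhs => rw [← Walk.cons_tail_eq _ hnil]
  rw [eq_tpath hG (tpath_isPath hG a r).tail]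
  rfl

lemma edges_tpath_eq_cons_parent {a : V} (ha : a ≠ r) :
    (tpath G hG a r).edges = s(a, hG.parent r a) :: (tpath G hG (hG.parent r a) r).edges := by
  obtain ⟨h, heq⟩ := hG.exists_tpath_eq_cons_parent ha
  rw [heq, Walk.edges_cons]

lemma height_eq_height_parent_add_one {a : V} (ha : a ≠ r) :
    hG.height r a = hG.height r (hG.parent r a) + 1 := by
  obtain ⟨h, heq⟩ := hG.exists_tpath_eq_cons_parent ha
  rw [height, heq, Walk.length_cons]
  rfl

variable (r) in
theorem rootward_induction {p : V → Prop} (root : p r)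
    (step : ∀ a, a ≠ r → p (hG.parent r a) → p a) (a : V) : p a := by
  induction hn : hG.height r a using Nat.strong_induction_on generalizing a with
  | _ n ih =>
    by_cases ha : a = r
    · exact ha ▸ root
    · have := hG.height_eq_height_parent_add_one ha
      exact step a ha (ih _ (by omega) _ rfl)

variable (r) in
noncomputable def edgeDepth : Sym2 V → ℕ :=
  Sym2.lift ⟨fun x y => max (hG.height r x) (hG.height r y), fun _ _ => max_comm _ _⟩

lemma edgeDepth_parent_edge {a : V} (ha : a ≠ r) :
    hG.edgeDepth r s(a, hG.parent r a) = hG.height r a := by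
  have := hG.height_eq_height_parent_add_one ha
  simp only [edgeDepth, Sym2.lift_mk]
  omega

lemma edgeDepth_le_height {a : V} {f : Sym2 V} (hf : f ∈ (tpath G hG a r).edges) :
    hG.edgeDepth r f ≤ hG.height r a := by
  induction a using hG.rootward_induction r with
  | root => simp [tpath_self] at hf
  | step a ha ih =>
    rw [hG.edges_tpath_eq_cons_parent ha, List.mem_cons] at hf
    rcases hf with rfl | hf
    · exact (hG.edgeDepth_parent_edge ha).le
    · have := hG.height_eq_height_parent_add_one ha
      have := ih hf
      omega

lemma parent_edge_notMem {a : V} (ha : a ≠ r) :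
    s(a, hG.parent r a) ∉ (tpath G hG (hG.parent r a) r).edges := fun h => by
  have := hG.edgeDepth_le_height h
  have := hG.edgeDepth_parent_edge ha
  have := hG.height_eq_height_parent_add_one ha
  omega

lemma eq_of_parent_edge_eq {a b : V} (ha : a ≠ r) (hb : b ≠ r)
    (h : s(a, hG.parent r a) = s(b, hG.parent r b)) : a = b := by
  rcases Sym2.eq_iff.1 h with ⟨hab, -⟩ | ⟨hab, hba⟩
  · exact hab
  · have h₁ := hG.height_eq_height_parent_add_one ha
    have h₂ := hG.height_eq_height_parent_add_one hb
    rw [hba] at h₁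
    rw [← hab] at h₂
    omega

lemma edges_tpath_subset_of_parent_edge_mem {a b : V} (ha : a ≠ r)
    (h : s(a, hG.parent r a) ∈ (tpath G hG b r).edges) :
    (tpath G hG a r).edges ⊆ (tpath G hG b r).edges := by
  induction b using hG.rootward_induction r with
  | root => simp [tpath_self] at h
  | step b hb ih =>
    rw [hG.edges_tpath_eq_cons_parent hb, List.mem_cons] at h
    rcases h with h | h
    · exact hG.eq_of_parent_edge_eq ha hb h ▸ List.Subset.refl _
    · rw [hG.edges_tpath_eq_cons_parent hb]
      exact fun f hf => List.mem_cons_of_mem _ (ih h hf)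

lemma mem_edges_tpath_of_edgeDepth_le {a b : V} {e f : Sym2 V}
    (hea : e ∈ (tpath G hG a r).edges) (heb : e ∈ (tpath G hG b r).edges)
    (hfa : f ∈ (tpath G hG a r).edges) (hfe : hG.edgeDepth r f ≤ hG.edgeDepth r e) :
    f ∈ (tpath G hG b r).edges := by
  induction a using hG.rootward_induction r with
  | root => simp [tpath_self] at hea
  | step a ha ih =>
    rw [hG.edges_tpath_eq_cons_parent ha, List.mem_cons] at hea hfa
    rcases hea with rfl | hea
    · exact hG.edges_tpath_subset_of_parent_edge_mem ha heb
        ((hG.edges_tpath_eq_cons_parent ha).symm ▸ List.mem_cons.2 hfa)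
    rcases hfa with rfl | hfa
    · have := hG.edgeDepth_le_height hea
      have := hG.edgeDepth_parent_edge ha
      have := hG.height_eq_height_parent_add_one ha
      omega
    · exact ih hea hfa

variable (r) in
lemma mem_edges_tpath_iff (u v : V) (f : Sym2 V) :
    f ∈ (tpath G hG u v).edges ↔ (f ∈ (tpath G hG u r).edges ↔ f ∉ (tpath G hG v r).edges) := by
  induction u using hG.rootward_induction r with
  | root =>
    rw [← eq_tpath hG (tpath_isPath hG v r).reverse, Walk.edges_reverse, List.mem_reverse,
      tpath_self]
    simp
  | step u hu ih =>
    obtain ⟨h, -⟩ := hG.exists_tpath_eq_cons_parent hu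
    have hnot := hG.parent_edge_notMem hu
    rw [hG.mem_edges_tpath_iff_of_adj h, ih, hG.edges_tpath_eq_cons_parent hu, List.mem_cons]
    by_cases hf : f = s(u, hG.parent r u) <;> simp_all

end SimpleGraph.IsTree

section VerticalCover

open Finset

variable {ι α β : Type*} [LinearOrder β]

/-- Abstracts the up-links of a rooted tree, `d` being the depth of an edge. -/
def IsVertical (d : α → β) (P : ι → Finset α) : Prop :=
  ∀ σ τ e, e ∈ P σ → e ∈ P τ →
    (∀ f ∈ P σ, d f ≤ d e → f ∈ P τ) ∨ (∀ f ∈ P τ, d f ≤ d e → f ∈ P σ)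

lemma exists_irredundant_subcover (P : ι → Finset α) (S : Set α) (K : Finset ι)
    (hK : ∀ e ∈ S, ∃ σ ∈ K, e ∈ P σ) :
    ∃ K₀ ⊆ K, (∀ e ∈ S, ∃ σ ∈ K₀, e ∈ P σ) ∧
      ∀ σ ∈ K₀, ∃ w ∈ S, w ∈ P σ ∧ ∀ τ ∈ K₀, w ∈ P τ → τ = σ := by
  induction K using Finset.strongInduction with
  | H K ih =>
    by_cases hmin : ∀ σ ∈ K, ∃ w ∈ S, w ∈ P σ ∧ ∀ τ ∈ K, w ∈ P τ → τ = σ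
    · exact ⟨K, subset_rfl, hK, hmin⟩
    push Not at hmin
    obtain ⟨σ, hσ, hredundant⟩ := hmin
    have hcover : ∀ e ∈ S, ∃ τ ∈ K.erase σ, e ∈ P τ := by
      intro e he
      obtain ⟨ρ, hρ, heρ⟩ := hK e he
      by_cases hρσ : ρ = σ
      · obtain ⟨τ, hτ, heτ, hτσ⟩ := hredundant e he (hρσ ▸ heρ)
        exact ⟨τ, mem_erase.2 ⟨hτσ, hτ⟩, heτ⟩
      · exact ⟨ρ, mem_erase.2 ⟨hρσ, hρ⟩, heρ⟩
    obtain ⟨K₀, hK₀, hrest⟩ := ih _ (erase_ssubset hσ) hcover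
    exact ⟨K₀, hK₀.trans (erase_subset σ K), hrest⟩

variable [DecidableEq α]

lemma IsVertical.card_filter_mem_le_one {d : α → β} {P : ι → Finset α} (hP : IsVertical d P)
    {S : Set α} {K : Finset ι} {e : α} (he : ∀ w ∈ S, d w ≤ d e)
    (hK : ∀ σ ∈ K, ∃ w ∈ S, w ∈ P σ ∧ ∀ τ ∈ K, w ∈ P τ → τ = σ) :
    #{σ ∈ K | e ∈ P σ} ≤ 1 := by
  refine card_le_one.2 fun σ hσ τ hτ => ?_
  rw [mem_filter] at hσ hτ
  obtain ⟨w, hwS, hwσ, hwunique⟩ := hK σ hσ.1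
  obtain ⟨w', hw'S, hw'τ, hw'unique⟩ := hK τ hτ.1
  rcases hP σ τ e hσ.2 hτ.2 with h | h
  · exact (hwunique τ hτ.1 (h w hwσ (he w hwS))).symm
  · exact hw'unique σ hσ.1 (h w' hw'τ (he w' hw'S))

lemma sum_mul_eq_sum_sub_ite_mul_add (T : Finset ι) (p : ι → Prop) [DecidablePred p]
    (γ g : ι → ℝ) (δ : ℝ) :
    ∑ σ ∈ T, γ σ * g σ =
      ∑ σ ∈ T, (γ σ - if p σ then δ else 0) * g σ + δ * ∑ σ ∈ T with p σ, g σ := by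
  rw [sum_filter, mul_sum, ← sum_add_distrib]
  refine sum_congr rfl fun σ _ => ?_
  split_ifs <;> ring

theorem IsVertical.exists_cover_sum_le_finset {d : α → β} {P : ι → Finset α}
    (hP : IsVertical d P) {K : Finset ι} {z : ι → ℝ} (hz : ∀ σ ∈ K, 0 ≤ z σ) (S : Finset α)
    (γ : ι → ℝ) (hγ : ∀ σ ∈ K, 0 ≤ γ σ) (hS : ∀ e ∈ S, 1 ≤ ∑ σ ∈ K with e ∈ P σ, z σ) :
    ∃ K₀ ⊆ K, (∀ e ∈ S, ∃ σ ∈ K₀, e ∈ P σ) ∧ ∑ σ ∈ K₀, γ σ ≤ ∑ σ ∈ K, γ σ * z σ := by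
  induction S using Finset.strongInduction generalizing γ with
  | H S ih =>
  rcases S.eq_empty_or_nonempty with rfl | hne
  · exact ⟨∅, empty_subset K, by simp,
      by simpa using sum_nonneg fun σ hσ => mul_nonneg (hγ σ hσ) (hz σ hσ)⟩
  obtain ⟨e, heS, hmax⟩ := S.exists_max_image d hne
  obtain ⟨σ₀, hσ₀, hσ₀min⟩ := exists_min_image _ γ
    (nonempty_of_sum_ne_zero (by linarith [hS e heS] : ∑ σ ∈ K with e ∈ P σ, z σ ≠ 0))
  rw [mem_filter] at hσ₀
  set δ := γ σ₀
  set γ' : ι → ℝ := fun σ => γ σ - if e ∈ P σ then δ else 0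
  have hsplit (T : Finset ι) (g : ι → ℝ) :
      ∑ σ ∈ T, γ σ * g σ = ∑ σ ∈ T, γ' σ * g σ + δ * ∑ σ ∈ T with e ∈ P σ, g σ :=
    sum_mul_eq_sum_sub_ite_mul_add T (e ∈ P ·) γ g δ
  have hγ' : ∀ σ ∈ K, 0 ≤ γ' σ := fun σ hσ => by
    by_cases h : e ∈ P σ
    · simpa [γ', h] using hσ₀min σ (mem_filter.2 ⟨hσ, h⟩)
    · simpa [γ', h] using hγ σ hσ
  obtain ⟨K₁, hK₁, hcov₁, hcost₁⟩ :=
    ih _ (erase_ssubset heS) γ' hγ' fun f hf => hS f (mem_of_mem_erase hf)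
  obtain ⟨K₂, hK₂, hcov₂, hmin₂⟩ := exists_irredundant_subcover P S
    (insert σ₀ K₁) fun f hf => by
      by_cases hfe : f = e
      · exact ⟨σ₀, mem_insert_self σ₀ K₁, hfe ▸ hσ₀.2⟩
      · obtain ⟨σ, hσ, hfσ⟩ := hcov₁ f (mem_erase.2 ⟨hfe, hf⟩)
        exact ⟨σ, mem_insert_of_mem hσ, hfσ⟩
  refine ⟨K₂, hK₂.trans (insert_subset hσ₀.1 hK₁), hcov₂, ?_⟩
  have hmult : (#{σ ∈ K₂ | e ∈ P σ} : ℝ) ≤ 1 :=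
    mod_cast hP.card_filter_mem_le_one hmax hmin₂
  have hδ : 0 ≤ δ := hγ σ₀ hσ₀.1
  calc ∑ σ ∈ K₂, γ σ = ∑ σ ∈ K₂, γ' σ + δ * #{σ ∈ K₂ | e ∈ P σ} := by
        simpa using hsplit K₂ 1
    _ ≤ ∑ σ ∈ insert σ₀ K₁, γ' σ + δ := by
        gcongr ?_ + ?_
        · exact sum_le_sum_of_subset_of_nonneg hK₂ fun σ hσ _ =>
            hγ' σ (insert_subset hσ₀.1 hK₁ hσ)
        · exact mul_le_of_le_one_right hδ hmult
    _ = ∑ σ ∈ K₁, γ' σ + δ := by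
        rw [sum_insert_of_eq_zero_if_notMem fun _ => by simp [γ', δ, hσ₀.2]]
    _ ≤ ∑ σ ∈ K, γ' σ * z σ + δ * ∑ σ ∈ K with e ∈ P σ, z σ := by
        linarith [le_mul_of_one_le_right hδ (hS e heS)]
    _ = ∑ σ ∈ K, γ σ * z σ := (hsplit K z).symm

theorem IsVertical.exists_cover_sum_le {d : α → β} {P : ι → Finset α} (hP : IsVertical d P)
    {K : Finset ι} {z : ι → ℝ} (hz : ∀ σ ∈ K, 0 ≤ z σ) (S : Set α) (γ : ι → ℝ)
    (hγ : ∀ σ ∈ K, 0 ≤ γ σ) (hS : ∀ e ∈ S, 1 ≤ ∑ σ ∈ K with e ∈ P σ, z σ) :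
    ∃ K₀ ⊆ K, (∀ e ∈ S, ∃ σ ∈ K₀, e ∈ P σ) ∧ ∑ σ ∈ K₀, γ σ ≤ ∑ σ ∈ K, γ σ * z σ := by
  have hfin : ∀ e ∈ S, e ∈ {e ∈ K.biUnion P | e ∈ S} := fun e he => by
    obtain ⟨σ, hσ, -⟩ := exists_ne_zero_of_sum_ne_zero
      (by linarith [hS e he] : ∑ σ ∈ K with e ∈ P σ, z σ ≠ 0)
    exact mem_filter.2 ⟨mem_biUnion.2 ⟨σ, (mem_filter.1 hσ).1, (mem_filter.1 hσ).2⟩, he⟩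
  obtain ⟨K₀, hK₀, hcov, hcost⟩ :=
    hP.exists_cover_sum_le_finset hz _ γ hγ fun e he => hS e (mem_filter.1 he).2
  exact ⟨K₀, hK₀, fun e he => hcov e (hfin e he), hcost⟩

end VerticalCover

namespace SimpleGraph.IsTree

open Finset

variable {V : Type*} {G : SimpleGraph V} (hG : G.IsTree) (r : V)

/-- The side of the tree path of `ℓ` at `ℓ.1`: its edges from `ℓ.1` up to the meet of `ℓ.1` and
`ℓ.2` in the tree rooted at `r`. -/
noncomputable def upLink (ℓ : V × V) : Finset (Sym2 V) :=
  (tpath G hG ℓ.1 r).edges.toFinset \ (tpath G hG ℓ.2 r).edges.toFinset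

lemma mem_edges_tpath_iff_mem_upLink (ℓ : V × V) (f : Sym2 V) :
    f ∈ (tpath G hG ℓ.1 ℓ.2).edges ↔ f ∈ hG.upLink r ℓ ∨ f ∈ hG.upLink r ℓ.swap := by
  rw [hG.mem_edges_tpath_iff r]
  simp only [upLink, mem_sdiff, List.mem_toFinset]
  tauto

lemma isVertical_upLink : IsVertical (hG.edgeDepth r) (hG.upLink r) := by
  intro σ τ e heσ heτ
  by_contra! h
  obtain ⟨⟨f, hfσ, hfe, hfτ⟩, ⟨g, hgτ, hge, hgσ⟩⟩ := h
  simp only [upLink, mem_sdiff, List.mem_toFinset, not_and_not_right] at heσ heτ hfσ hfτ hgτ hgσ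
  have hfτ₁ := hG.mem_edges_tpath_of_edgeDepth_le heσ.1 heτ.1 hfσ.1 hfe
  have hgσ₁ := hG.mem_edges_tpath_of_edgeDepth_le heτ.1 heσ.1 hgτ.1 hge
  rcases le_total (hG.edgeDepth r f) (hG.edgeDepth r g) with hfg | hgf
  · exact hfσ.2 (hG.mem_edges_tpath_of_edgeDepth_le hgσ₁ (hgσ hgσ₁) hfσ.1 hfg)
  · exact hgτ.2 (hG.mem_edges_tpath_of_edgeDepth_le hfτ₁ (hfτ hfτ₁) hgτ.1 hgf)

lemma sum_filter_mem_upLink (L : Finset (V × V)) (g : V × V → ℝ) (e : Sym2 V) :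
    ∑ σ ∈ L ×ˢ (univ : Finset Bool) with e ∈ hG.upLink r (if σ.2 then σ.1 else σ.1.swap), g σ.1 =
      ∑ ℓ ∈ L with ℓ ∈ covE G hG e, g ℓ := by
  rw [sum_filter, sum_filter, sum_product]
  refine sum_congr rfl fun ℓ _ => ?_
  have hpath := hG.mem_edges_tpath_iff_mem_upLink r ℓ e
  have hdisj : ¬(e ∈ hG.upLink r ℓ ∧ e ∈ hG.upLink r ℓ.swap) := by
    simp only [upLink, mem_sdiff, List.mem_toFinset, Prod.fst_swap, Prod.snd_swap]
    tauto
  rw [Fintype.sum_bool, show ℓ ∈ covE G hG e ↔ _ from hpath]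
  by_cases h₁ : e ∈ hG.upLink r ℓ <;> by_cases h₂ : e ∈ hG.upLink r ℓ.swap <;> simp_all

theorem exists_cover_sum_le_two_mul (L : Finset (V × V)) (c y : V × V → ℝ)
    (hc : ∀ ℓ ∈ L, 0 ≤ c ℓ) (hy : ∀ ℓ ∈ L, 0 ≤ y ℓ) (S : Set (Sym2 V))
    (hS : ∀ e ∈ S, 1 ≤ ∑ ℓ ∈ L with ℓ ∈ covE G hG e, y ℓ) :
    ∃ L₀ ⊆ L, (∀ e ∈ S, ∃ ℓ ∈ L₀, e ∈ (tpath G hG ℓ.1 ℓ.2).edges) ∧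
      ∑ ℓ ∈ L₀, c ℓ ≤ 2 * ∑ ℓ ∈ L, c ℓ * y ℓ := by
  obtain ⟨r⟩ : Nonempty V := hG.connected.nonempty
  have hP : IsVertical (hG.edgeDepth r)
      fun σ : (V × V) × Bool => hG.upLink r (if σ.2 then σ.1 else σ.1.swap) :=
    fun σ τ => hG.isVertical_upLink r _ _
  obtain ⟨K₀, hK₀, hcov, hcost⟩ := hP.exists_cover_sum_le (K := L ×ˢ univ) (z := fun σ => y σ.1)
    (fun σ hσ => hy σ.1 (mem_product.1 hσ).1) S (fun σ => c σ.1)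
    (fun σ hσ => hc σ.1 (mem_product.1 hσ).1)
    fun e he => (hS e he).trans_eq (hG.sum_filter_mem_upLink r L y e).symm
  have hL₀ : K₀.image Prod.fst ⊆ L := fun ℓ hℓ => by
    obtain ⟨σ, hσ, rfl⟩ := mem_image.1 hℓ
    exact (mem_product.1 (hK₀ hσ)).1
  refine ⟨K₀.image Prod.fst, hL₀, fun e he => ?_, ?_⟩
  · obtain ⟨⟨ℓ, b⟩, hσ, heσ⟩ := hcov e he
    refine ⟨ℓ, mem_image_of_mem _ hσ, (hG.mem_edges_tpath_iff_mem_upLink r ℓ e).2 ?_⟩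
    cases b
    · exact Or.inr heσ
    · exact Or.inl heσ
  · calc ∑ ℓ ∈ K₀.image Prod.fst, c ℓ ≤ ∑ σ ∈ K₀, c σ.1 :=
          sum_image_le_of_nonneg fun ℓ hℓ => hc ℓ (hL₀ hℓ)
      _ ≤ ∑ σ ∈ L ×ˢ univ, c σ.1 * y σ.1 := hcost
      _ = 2 * ∑ ℓ ∈ L, c ℓ * y ℓ := by
          rw [sum_product, mul_sum]
          exact sum_congr rfl fun ℓ _ => by rw [Fintype.sum_bool]; ring

end SimpleGraph.IsTree

theorem heavy_edges_contraction_general {V : Type*}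
    (G : SimpleGraph V) (hG : G.IsTree) (L : Finset (V × V)) (c x : V × V → ℝ)
    (hc : ∀ ℓ, 0 ≤ c ℓ) (hx : ∀ ℓ, 0 ≤ x ℓ)
    (ε : ℝ) (hε : 0 < ε)
    (Eh : Set (Sym2 V))
    (hEh : Eh = {e ∈ G.edgeSet | 2 / ε ≤ ∑ ℓ ∈ L.filter (· ∈ covE G hG e), x ℓ}) :
    (∀ e ∈ Eh, 1 ≤ ∑ ℓ ∈ L.filter (· ∈ covE G hG e), (ε / 2) * x ℓ) ∧
    ∃ L₀ ⊆ L, (∀ e ∈ Eh, ∃ ℓ ∈ L₀, e ∈ (tpath G hG ℓ.1 ℓ.2).edges) ∧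
      ∑ ℓ ∈ L₀, c ℓ ≤ ε * ∑ ℓ ∈ L, c ℓ * x ℓ := by
  have hy : ∀ e ∈ Eh, 1 ≤ ∑ ℓ ∈ L.filter (· ∈ covE G hG e), (ε / 2) * x ℓ := by
    intro e he
    rw [hEh] at he
    rw [← Finset.mul_sum]
    calc (1 : ℝ) = ε / 2 * (2 / ε) := by field_simp
      _ ≤ _ := by gcongr; exact he.2
  obtain ⟨L₀, hL₀, hcov, hcost⟩ := hG.exists_cover_sum_le_two_mul L c (fun ℓ => ε / 2 * x ℓ)
    (fun ℓ _ => hc ℓ) (fun ℓ _ => by have := hx ℓ; positivity) Eh hy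
  refine ⟨hy, L₀, hL₀, hcov, hcost.trans_eq ?_⟩
  rw [Finset.mul_sum, Finset.mul_sum]
  exact Finset.sum_congr rfl fun ℓ _ => by ring

/-- Let `x` be feasible for the cut LP on the tree `G` and let
`E^h = {e : x(cov(e)) ≥ 2/ε}` be the heavily covered edges.  Then `y = (ε/2)·x` is
feasible for the cut LP on the contracted tree `G^h` (it fully covers every edge of
`E^h`), and hence, via the factor-`2` rounding, there is `L₀ ⊆ L` covering all edges of
`E^h` with `c(L₀) ≤ ε·cᵀx`. -/
theorem heavy_edges_contraction {V : Type*} [Fintype V] [DecidableEq V]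
    (G : SimpleGraph V) (hG : G.IsTree) (L : Finset (V × V)) (c x : V × V → ℝ)
    (hc : ∀ ℓ, 0 ≤ c ℓ) (hx : ∀ ℓ, 0 ≤ x ℓ)
    (ε : ℝ) (hε : 0 < ε)
    (hfeas : ∀ e ∈ G.edgeSet, 1 ≤ ∑ ℓ ∈ L.filter (· ∈ covE G hG e), x ℓ)
    (Eh : Set (Sym2 V))
    (hEh : Eh = {e ∈ G.edgeSet | 2 / ε ≤ ∑ ℓ ∈ L.filter (· ∈ covE G hG e), x ℓ}) :
    (∀ e ∈ Eh, 1 ≤ ∑ ℓ ∈ L.filter (· ∈ covE G hG e), (ε / 2) * x ℓ) ∧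
    ∃ L₀ ⊆ L, (∀ e ∈ Eh, ∃ ℓ ∈ L₀, e ∈ (tpath G hG ℓ.1 ℓ.2).edges) ∧
      ∑ ℓ ∈ L₀, c ℓ ≤ ε * ∑ ℓ ∈ L, c ℓ * x ℓ :=
  heavy_edges_contraction_general G hG L c x hc hx ε hε Eh hEh
end
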